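/- arXiv:1404.7810 — 9 statements merged into one kernel-verified Lean document; each statement's English description precedes it below -/
import Mathlib

section
/- Let G be a graph, v a vertex, and α a layout of G of bandwidth b. Define β'(u) = 2(α(v) − α(u)) if α(u) ≤ α(v) and β'(u) = 2(α(u) − α(v)) − 1 otherwise. Then β' is an injective function into ℤ whose bandwidth is at most 2b. -/
/-- `layoutBandwidthLE G α b` means the layout `α` of `G` has bandwidth at most `b`. -/
def layoutBandwidthLE {V : Type} [Fintype V] (G : SimpleGraph V)
    (α : V ≃ Fin (Fintype.card V)) (b : ℕ) : Prop :=
  ∀ u v : V, G.Adj u v → |(α u : ℤ) - (α v : ℤ)| ≤ (b : ℤ)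

/-- Right folding a bandwidth-`b` layout `α` around a vertex `v` yields an injective
map into `ℤ` of bandwidth at most `2b`. -/
theorem rightFold_injective_and_bandwidth {V : Type} [Fintype V] (G : SimpleGraph V)
    (b : ℕ) (α : V ≃ Fin (Fintype.card V)) (hα : layoutBandwidthLE G α b)
    (v : V) (β' : V → ℤ)
    (hβ' : ∀ u : V, β' u =
      if α u ≤ α v then 2 * ((α v : ℤ) - (α u : ℤ))
      else 2 * ((α u : ℤ) - (α v : ℤ)) - 1) :
    Function.Injective β' ∧ ∀ u w : V, G.Adj u w → |β' u - β' w| ≤ 2 * (b : ℤ) := by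
  constructor
  · intro u w h
    rw [hβ' u, hβ' w] at h
    have key : (α u : ℤ) = (α w : ℤ) := by
      by_cases h1 : α u ≤ α v <;> by_cases h2 : α w ≤ α v <;>
        simp only [h1, h2, if_true, if_false, if_pos, if_neg, not_false_iff] at h <;> omega
    exact α.injective (Fin.ext (by exact_mod_cast key))
  · intro u w hadj
    have hb := hα u w hadj
    rw [hβ' u, hβ' w]
    have h1 : (α u : ℤ) ≤ (α v : ℤ) ↔ α u ≤ α v := by
      exact_mod_cast Iff.rfl
    have h2 : (α w : ℤ) ≤ (α v : ℤ) ↔ α w ≤ α v := by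
      exact_mod_cast Iff.rfl
    by_cases c1 : α u ≤ α v <;> by_cases c2 : α w ≤ α v <;>
      simp only [c1, c2, if_true, if_false, if_pos, if_neg, not_false_iff] <;>
      rw [abs_le] at * <;>
      constructor <;> omega
end

section
/- Let T be a graph, b an integer and α a layout of T of bandwidth at most b. Let P = (u,v) be an edge of T, and P¹,...,Pᵏ be k paths in T, all pairwise vertex-disjoint from each other and from {u,v}, each passing through (u,v) with respect to α (meaning I({u,v}) ⊆ I(Pⁱ), where I(S) = [min α(S), max α(S)]). Suppose there is a set X of vertices, disjoint from {u,v} and from all the Pⁱ, with |X| ≥ b − k − 1 and α(X) ⊆ I({u,v}). Then |X| = b − k − 1. -/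
/-- The inclusion interval `I(S) = [min α(S), max α(S)]` of a vertex set `S` under a layout. -/
noncomputable def inclInterval {V : Type} [Fintype V] (α : V ≃ Fin (Fintype.card V))
    (S : Set V) : Set ℕ :=
  Set.Icc (sInf ((fun x => (α x : ℕ)) '' S)) (sSup ((fun x => (α x : ℕ)) '' S))

lemma walk_cross {V : Type} {G : SimpleGraph V} (f : V → ℕ) {p q : ℕ} (hpq : p ≤ q) :
    ∀ {x y : V} (W : G.Walk x y), f x < p → q < f y →
      (∃ w ∈ W.support, p ≤ f w ∧ f w ≤ q) ∨
      (∃ d ∈ W.darts, f d.fst < p ∧ q < f d.snd) := by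
  intro x y W
  induction W with
  | nil => intro h1 h2; omega
  | @cons a c y h W ih =>
    intro h1 h2
    rcases lt_or_ge (f c) p with hc | hc
    · rcases ih hc h2 with ⟨w, hw, hw2⟩ | ⟨d, hd, hd2⟩
      · exact Or.inl ⟨w, by simp [hw], hw2⟩
      · exact Or.inr ⟨d, by simp [hd], hd2⟩
    · rcases le_or_gt (f c) q with hc2 | hc2
      · exact Or.inl ⟨c, by simp, hc, hc2⟩
      · exact Or.inr ⟨⟨(a, c), h⟩, by simp, h1, hc2⟩

/-- Corollary: if `k` disjoint paths pass through an edge `uv` in a bandwidth-`b`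
layout, and a disjoint vertex set `X` with `|X| ≥ b - k - 1` is mapped into `I({u,v})`,
then `|X| = b - k - 1`. -/
theorem passing_edge_requires_space {V : Type} [Fintype V] (T : SimpleGraph V) (b k : ℕ)
    (α : V ≃ Fin (Fintype.card V)) (hα : layoutBandwidthLE T α b)
    (u v : V) (huv : T.Adj u v)
    (xs ys : Fin k → V) (P : ∀ i, T.Walk (xs i) (ys i)) (hP : ∀ i, (P i).IsPath)
    (hPdisj : ∀ i j, i ≠ j → ∀ w, w ∈ (P i).support → w ∉ (P j).support)
    (hPuv : ∀ i, u ∉ (P i).support ∧ v ∉ (P i).support)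
    (hpass : ∀ i, inclInterval α {u, v} ⊆ inclInterval α {w | w ∈ (P i).support})
    (X : Finset V) (hXu : u ∉ X) (hXv : v ∉ X)
    (hXP : ∀ i, ∀ w ∈ X, w ∉ (P i).support)
    (hXcard : (b : ℤ) - (k : ℤ) - 1 ≤ (X.card : ℤ))
    (hXI : ∀ w ∈ X, (α w : ℕ) ∈ inclInterval α {u, v}) :
    (X.card : ℤ) = (b : ℤ) - (k : ℤ) - 1 := by
  classical
  set f : V → ℕ := fun w => (α w : ℕ) with hf_def
  have hf : Function.Injective f := fun a b h => α.injective (Fin.ext h)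
  set m := min (f u) (f v) with hm_def
  set M := max (f u) (f v) with hM_def
  have hmM : m ≤ M := min_le_max
  have hI : inclInterval α {u, v} = Set.Icc m M := by
    unfold inclInterval
    rw [Set.image_pair, csInf_pair, csSup_pair]
  have hum : m ≤ f u ∧ f u ≤ M := ⟨min_le_left _ _, le_max_left _ _⟩
  have hvm : m ≤ f v ∧ f v ≤ M := ⟨min_le_right _ _, le_max_right _ _⟩
  have hband : (M : ℤ) - (m : ℤ) ≤ b := by
    have h := hα u v huv
    rw [abs_le] at h
    have h1 : ((α u : ℕ) : ℤ) = (α u : ℤ) := rfl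
    have h2 : ((α v : ℕ) : ℤ) = (α v : ℤ) := rfl
    rcases le_total (f u) (f v) with hle | hle
    · rw [hm_def, hM_def, min_eq_left hle, max_eq_right hle]
      simp only [hf_def] at *
      omega
    · rw [hm_def, hM_def, min_eq_right hle, max_eq_left hle]
      simp only [hf_def] at *
      omega
  have hdich : ∀ i : Fin k,
      (∃ w ∈ (P i).support, m ≤ f w ∧ f w ≤ M) ∨
      (∃ x y0, x ∈ (P i).support ∧ y0 ∈ (P i).support ∧ T.Adj x y0 ∧
        f x < m ∧ M < f y0) := by
    intro i
    set Si : Set ℕ := (fun x => (α x : ℕ)) '' {w | w ∈ (P i).support} with hSi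
    have hSne : Si.Nonempty := ⟨f (xs i), ⟨xs i, (P i).start_mem_support, rfl⟩⟩
    have hSfin : Si.Finite := Set.toFinite _
    have hlo : sInf Si ≤ m := by
      have h := hpass i (by rw [hI]; exact ⟨le_refl m, hmM⟩)
      simpa [inclInterval, Set.mem_Icc] using h.1
    have hhi : M ≤ sSup Si := by
      have h := hpass i (by rw [hI]; exact ⟨hmM, le_refl M⟩)
      simpa [inclInterval, Set.mem_Icc] using h.2
    obtain ⟨a, ha, hfa⟩ := Nat.sInf_mem hSne
    obtain ⟨c, hc, hfc⟩ := hSne.csSup_mem hSfin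
    have ha' : a ∈ (P i).support := ha
    have hc' : c ∈ (P i).support := hc
    have hau : a ≠ u := fun h => (hPuv i).1 (h ▸ ha')
    have hav : a ≠ v := fun h => (hPuv i).2 (h ▸ ha')
    have hcu : c ≠ u := fun h => (hPuv i).1 (h ▸ hc')
    have hcv : c ≠ v := fun h => (hPuv i).2 (h ▸ hc')
    have hfa0 : f a = sInf Si := hfa
    have hfc0 : f c = sSup Si := hfc
    have hfa' : f a < m := by
      have hle : f a ≤ m := le_of_eq_of_le hfa0 hlo
      rcases lt_or_eq_of_le hle with h | h
      · exact h
      · exfalso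
        have he : m = f u ∨ m = f v := min_choice _ _
        rcases he with he | he
        · exact hau (hf (h.trans he))
        · exact hav (hf (h.trans he))
    have hfc' : M < f c := by
      have hle : M ≤ f c := le_of_le_of_eq hhi hfc0.symm
      rcases lt_or_eq_of_le hle with h | h
      · exact h
      · exfalso
        have he : M = f u ∨ M = f v := max_choice _ _
        rcases he with he | he
        · exact hcu (hf (h.symm.trans he))
        · exact hcv (hf (h.symm.trans he))
    set Q := (((P i).takeUntil a ha').reverse.append ((P i).takeUntil c hc')) with hQ
    have hQsub : ∀ w ∈ Q.support, w ∈ (P i).support := by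
      intro w hw
      rw [hQ, SimpleGraph.Walk.mem_support_append_iff] at hw
      rcases hw with hw | hw
      · rw [SimpleGraph.Walk.support_reverse, List.mem_reverse] at hw
        exact SimpleGraph.Walk.support_takeUntil_subset _ _ hw
      · exact SimpleGraph.Walk.support_takeUntil_subset _ _ hw
    rcases walk_cross f hmM Q hfa' hfc' with ⟨w, hw, h1, h2⟩ | ⟨d, hd, h1, h2⟩
    · exact Or.inl ⟨w, hQsub w hw, h1, h2⟩
    · exact Or.inr ⟨d.fst, d.snd,
        hQsub _ (SimpleGraph.Walk.dart_fst_mem_support_of_mem_darts _ hd),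
        hQsub _ (SimpleGraph.Walk.dart_snd_mem_support_of_mem_darts _ hd),
        d.adj, h1, h2⟩
  have huvne : u ≠ v := huv.ne
  have hXIcc : ∀ w ∈ X, m ≤ f w ∧ f w ≤ M := by
    intro w hw
    have h := hXI w hw
    rw [hI, Set.mem_Icc] at h
    exact h
  by_cases hA : ∀ i : Fin k, ∃ w ∈ (P i).support, m ≤ f w ∧ f w ≤ M
  · -- case A: every path has a vertex inside [m, M]
    choose w hw1 hw2 using hA
    have hwinj : Function.Injective w := by
      intro i j hij
      by_contra hne
      exact hPdisj i j hne (w i) (hw1 i) (hij ▸ hw1 j)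
    set Y : Finset V := (X ∪ {u, v}) ∪ Finset.image w Finset.univ with hY
    have hcard2 : ({u, v} : Finset V).card = 2 := by
      rw [Finset.card_insert_of_notMem (by simp [huvne]), Finset.card_singleton]
    have hd1 : Disjoint X ({u, v} : Finset V) := by
      rw [Finset.disjoint_right]
      intro a ha
      simp only [Finset.mem_insert, Finset.mem_singleton] at ha
      rcases ha with rfl | rfl
      · exact hXu
      · exact hXv
    have hd2 : Disjoint (X ∪ {u, v}) (Finset.image w Finset.univ) := by
      rw [Finset.disjoint_right]
      intro a ha hXa
      simp only [Finset.mem_image, Finset.mem_univ, true_and] at ha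
      obtain ⟨i, rfl⟩ := ha
      rcases Finset.mem_union.mp hXa with h | h
      · exact hXP i (w i) h (hw1 i)
      · rcases Finset.mem_insert.mp h with h | h
        · exact (hPuv i).1 (h ▸ hw1 i)
        · rw [Finset.mem_singleton] at h
          exact (hPuv i).2 (h ▸ hw1 i)
    have hYcard : Y.card = X.card + 2 + k := by
      rw [hY, Finset.card_union_of_disjoint hd2, Finset.card_union_of_disjoint hd1, hcard2,
        Finset.card_image_of_injective _ hwinj, Finset.card_univ, Fintype.card_fin]
    have hYsub : Y.image f ⊆ Finset.Icc m M := by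
      intro p hp
      simp only [Finset.mem_image] at hp
      obtain ⟨a, ha, rfl⟩ := hp
      rw [Finset.mem_Icc]
      rw [hY, Finset.mem_union, Finset.mem_union] at ha
      rcases ha with (ha | ha) | ha
      · exact hXIcc a ha
      · rcases Finset.mem_insert.mp ha with h | h
        · rw [h]; exact hum
        · rw [Finset.mem_singleton] at h; rw [h]; exact hvm
      · simp only [Finset.mem_image, Finset.mem_univ, true_and] at ha
        obtain ⟨i, rfl⟩ := ha
        exact hw2 i
    have hle : X.card + 2 + k ≤ M + 1 - m := by
      have h1 : (Y.image f).card = Y.card := Finset.card_image_of_injective _ hf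
      have h2 := Finset.card_le_card hYsub
      rw [h1, Nat.card_Icc, hYcard] at h2
      exact h2
    omega
  · -- case B: some path jumps over the interval; contradiction
    push_neg at hA
    obtain ⟨i0, hi0⟩ := hA
    have hjump0 : ∃ x0 y0, x0 ∈ (P i0).support ∧ y0 ∈ (P i0).support ∧ T.Adj x0 y0 ∧
        f x0 < m ∧ M < f y0 := by
      rcases hdich i0 with ⟨w0, hw0, h1, h2⟩ | h
      · exact absurd (hi0 w0 hw0 h1) (not_lt.mpr h2)
      · exact h
    set JS : Finset (V × V) := Finset.univ.filter
      (fun pr => T.Adj pr.1 pr.2 ∧ f pr.1 < m ∧ M < f pr.2 ∧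
        ∃ i, pr.1 ∈ (P i).support ∧ pr.2 ∈ (P i).support) with hJS
    obtain ⟨x0, y0, hx0, hy0, hadj0, hfx0, hfy0⟩ := hjump0
    have hne : JS.Nonempty := ⟨(x0, y0), by
      rw [hJS, Finset.mem_filter]
      exact ⟨Finset.mem_univ _, hadj0, hfx0, hfy0, i0, hx0, hy0⟩⟩
    obtain ⟨pr, hpr, hmax⟩ := JS.exists_max_image (fun pr => f pr.2 - f pr.1) hne
    rw [hJS, Finset.mem_filter] at hpr
    obtain ⟨-, hadjs, hL, hR, istar, hxs', hys'⟩ := hpr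
    set L := f pr.1 with hL_def
    set R := f pr.2 with hR_def
    have hLR : L < R := by omega
    have hbandLR : (R : ℤ) - (L : ℤ) ≤ b := by
      have h := hα pr.1 pr.2 hadjs
      rw [abs_le] at h
      have h1 : ((α pr.1 : ℕ) : ℤ) = (α pr.1 : ℤ) := rfl
      have h2 : ((α pr.2 : ℕ) : ℤ) = (α pr.2 : ℤ) := rfl
      simp only [hL_def, hR_def, hf_def] at *
      omega
    have hz : ∀ i : Fin k, i ≠ istar → ∃ zz, zz ∈ (P i).support ∧ L < f zz ∧ f zz < R := by
      intro i hi
      rcases hdich i with ⟨w0, hw0, h1, h2⟩ | ⟨x', y', hx', hy', hadj', h1, h2⟩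
      · exact ⟨w0, hw0, by omega, by omega⟩
      · have hmem : (x', y') ∈ JS := by
          rw [hJS, Finset.mem_filter]
          exact ⟨Finset.mem_univ _, hadj', h1, h2, i, hx', hy'⟩
        have hwle := hmax _ hmem
        simp only at hwle
        have hxne : f x' ≠ L := by
          intro h
          exact hPdisj i istar hi x' hx' (by rw [hf h]; exact hxs')
        by_cases hcase : L < f x'
        · exact ⟨x', hx', hcase, by omega⟩
        · exact ⟨y', hy', by omega, by omega⟩
    have hz' : ∀ i : Fin k, ∃ zz : V, i ≠ istar →
        zz ∈ (P i).support ∧ L < f zz ∧ f zz < R := by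
      intro i
      by_cases hi : i = istar
      · exact ⟨u, fun h => absurd hi h⟩
      · obtain ⟨zz, h1, h2, h3⟩ := hz i hi
        exact ⟨zz, fun _ => ⟨h1, h2, h3⟩⟩
    choose z hzp using hz'
    set Z : Finset V := (Finset.univ.erase istar).image z with hZ
    have hZinj : Set.InjOn z (Finset.univ.erase istar) := by
      intro i hi j hj hij
      by_contra hne'
      have hi' : i ≠ istar := (Finset.mem_erase.mp hi).1
      have hj' : j ≠ istar := (Finset.mem_erase.mp hj).1
      exact hPdisj i j hne' (z i) ((hzp i hi').1) (by rw [hij]; exact (hzp j hj').1)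
    have hZcard : Z.card = k - 1 := by
      rw [hZ, Finset.card_image_of_injOn hZinj,
        Finset.card_erase_of_mem (Finset.mem_univ _), Finset.card_univ, Fintype.card_fin]
    have hd1 : Disjoint X ({u, v} : Finset V) := by
      rw [Finset.disjoint_right]
      intro a ha
      simp only [Finset.mem_insert, Finset.mem_singleton] at ha
      rcases ha with rfl | rfl
      · exact hXu
      · exact hXv
    have hd2 : Disjoint (X ∪ {u, v}) Z := by
      rw [Finset.disjoint_right]
      intro a ha hXa
      rw [hZ, Finset.mem_image] at ha
      obtain ⟨i, hi, rfl⟩ := ha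
      have hi' : i ≠ istar := (Finset.mem_erase.mp hi).1
      have hzi := (hzp i hi').1
      rcases Finset.mem_union.mp hXa with h | h
      · exact hXP i (z i) h hzi
      · rcases Finset.mem_insert.mp h with h | h
        · exact (hPuv i).1 (h ▸ hzi)
        · rw [Finset.mem_singleton] at h
          exact (hPuv i).2 (h ▸ hzi)
    set Y : Finset V := (X ∪ {u, v}) ∪ Z with hY
    have hcard2 : ({u, v} : Finset V).card = 2 := by
      rw [Finset.card_insert_of_notMem (by simp [huvne]), Finset.card_singleton]
    have hYcard : Y.card = X.card + 2 + (k - 1) := by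
      rw [hY, Finset.card_union_of_disjoint hd2, Finset.card_union_of_disjoint hd1, hcard2,
        hZcard]
    have hYsub : Y.image f ⊆ Finset.Ioo L R := by
      intro p hp
      simp only [Finset.mem_image] at hp
      obtain ⟨a, ha, rfl⟩ := hp
      rw [Finset.mem_Ioo]
      rw [hY, Finset.mem_union, Finset.mem_union] at ha
      rcases ha with (ha | ha) | ha
      · have := hXIcc a ha; omega
      · rcases Finset.mem_insert.mp ha with h | h
        · rw [h]; omega
        · rw [Finset.mem_singleton] at h; rw [h]; omega
      · rw [hZ, Finset.mem_image] at ha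
        obtain ⟨i, hi, rfl⟩ := ha
        have hi' : i ≠ istar := (Finset.mem_erase.mp hi).1
        exact ⟨(hzp i hi').2.1, (hzp i hi').2.2⟩
    have hle : X.card + 2 + (k - 1) ≤ R - L - 1 := by
      have h1 : (Y.image f).card = Y.card := Finset.card_image_of_injective _ hf
      have h2 := Finset.card_le_card hYsub
      rw [h1, Nat.card_Ioo, hYcard] at h2
      exact h2
    have hk : 1 ≤ k := istar.pos
    omega
end

section
/- Let T be a graph, b an integer and α a layout of T of bandwidth at most b. Let ê = (u,v) be an edge of T, and P¹,...,Pᵏ be paths in T, pairwise vertex-disjoint from each other and from {u,v}, each passing through (u,v) with respect to α. Suppose there is a set X of vertices, disjoint from {u,v} and all Pⁱ, with |X| ≥ b − k − 1 and α(X) ⊆ I({u,v}). Then for every i, exactly one vertex of Pⁱ is mapped by α into I({u,v}). -/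
open Finset Function

namespace Finset

variable {ι V β : Type*} [Fintype ι]

theorem card_add_sum_card_le_of_injective [DecidableEq V] {f : V → β} (hf : Injective f)
    {A : Finset V} {Q : ι → Finset V} {s : Finset β}
    (hQ : Pairwise (Disjoint on Q)) (hAQ : ∀ i, Disjoint A (Q i))
    (hA : Set.MapsTo f A s) (hQs : ∀ i, Set.MapsTo f (Q i) s) :
    #A + ∑ i, #(Q i) ≤ #s :=
  calc #A + ∑ i, #(Q i) = #(A ∪ univ.biUnion Q) := by
        rw [card_union_of_disjoint ((disjoint_biUnion_right _ _ _).2 fun i _ => hAQ i),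
          card_biUnion (hQ.set_pairwise _)]
    _ ≤ #s := by
        refine card_le_card_of_injOn f (fun z hz => ?_) hf.injOn
        simp only [coe_union, coe_biUnion, coe_univ, Set.mem_union, Set.mem_iUnion] at hz
        obtain hz | ⟨i, -, hz⟩ := hz
        exacts [hA hz, hQs i hz]

theorem card_le_sum_card_of_nonempty {Q : ι → Finset V} (hQ : ∀ i, (Q i).Nonempty) :
    Fintype.card ι ≤ ∑ i, #(Q i) := by
  simpa using card_nsmul_le_sum univ (fun i => #(Q i)) 1 fun i _ => (hQ i).card_pos

theorem card_eq_one_of_sum_card_le {Q : ι → Finset V} (hQ : ∀ i, (Q i).Nonempty)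
    (hsum : ∑ i, #(Q i) ≤ Fintype.card ι) (i : ι) : #(Q i) = 1 := by
  have hk : ∑ _j : ι, 1 = Fintype.card ι := by simp
  refine ((sum_eq_sum_iff_of_le fun j _ => (hQ j).card_pos).1
    (le_antisymm (hk ▸ card_le_sum_card_of_nonempty hQ) (hk ▸ hsum)) i (mem_univ i)).symm

end Finset

namespace SimpleGraph.Walk

variable {V : Type*} {G : SimpleGraph V}

theorem exists_boundary_adj_of_mem_support {x y : V} (w : G.Walk x y) (S : Set V) {p q : V}
    (hp : p ∈ w.support) (hq : q ∈ w.support) (hpS : p ∈ S) (hqS : q ∉ S) :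
    ∃ c d, G.Adj c d ∧ c ∈ w.support ∧ d ∈ w.support ∧ c ∈ S ∧ d ∉ S := by
  classical
  let w' : G.Walk p q := (w.takeUntil p hp).reverse.append (w.takeUntil q hq)
  have hsupp : ∀ z ∈ w'.support, z ∈ w.support := by
    intro z hz
    rw [support_append, support_reverse, List.mem_append, List.mem_reverse] at hz
    obtain hz | hz := hz
    exacts [support_takeUntil_subset_support _ hp hz,
      support_takeUntil_subset_support _ hq (List.mem_of_mem_tail hz)]
  obtain ⟨d, hd, hdS⟩ := w'.exists_boundary_dart S hpS hqS
  exact ⟨d.fst, d.snd, d.adj, hsupp _ (w'.dart_fst_mem_support_of_mem_darts hd),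
    hsupp _ (w'.dart_snd_mem_support_of_mem_darts hd), hdS⟩

end SimpleGraph.Walk

section Layout

variable {V : Type} [Fintype V] {α : V ≃ Fin (Fintype.card V)}

theorem inclInterval_pair (α : V ≃ Fin (Fintype.card V)) (u v : V) :
    inclInterval α {u, v} = Set.Icc (min (α u : ℕ) (α v)) (max (α u : ℕ) (α v)) := by
  rw [inclInterval, Set.image_pair, csInf_pair, csSup_pair]

theorem mem_inclInterval_of_mem {S : Set V} {s : V} (hs : s ∈ S) :
    (α s : ℕ) ∈ inclInterval α S :=
  ⟨Nat.sInf_le ⟨s, hs, rfl⟩, le_csSup (Set.toFinite _).bddAbove ⟨s, hs, rfl⟩⟩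

theorem exists_le_of_mem_inclInterval {S : Set V} (hS : S.Nonempty) {n : ℕ}
    (hn : n ∈ inclInterval α S) : ∃ s ∈ S, (α s : ℕ) ≤ n := by
  obtain ⟨s, hs, hs'⟩ := Nat.sInf_mem (hS.image fun x => (α x : ℕ))
  exact ⟨s, hs, hs'.trans_le hn.1⟩

theorem exists_lt_of_mem_inclInterval {S : Set V} (hS : S.Nonempty) {n : ℕ}
    (hn : n ∈ inclInterval α S) (hnS : ∀ s ∈ S, (α s : ℕ) ≠ n) : ∃ s ∈ S, n < (α s : ℕ) := by
  obtain ⟨s, hs, hs'⟩ := (hS.image fun x => (α x : ℕ)).csSup_mem (Set.toFinite _)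
  exact ⟨s, hs, (hn.2.trans_eq hs'.symm).lt_of_ne' (hnS s hs)⟩

variable {G : SimpleGraph V} {b : ℕ}

theorem SimpleGraph.Walk.exists_mem_support_mem_Icc_of_layoutBandwidthLE
    (hα : layoutBandwidthLE G α b) {x y : V} (w : G.Walk x y) {c : ℕ} {p q : V}
    (hp : p ∈ w.support) (hq : q ∈ w.support) (hpc : (α p : ℕ) ≤ c) (hcq : c < (α q : ℕ)) :
    ∃ z ∈ w.support, (α z : ℕ) ∈ Set.Icc (c + 1 - b) c := by
  obtain ⟨z, d, hzd, hz, -, hzc, hdc⟩ :=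
    w.exists_boundary_adj_of_mem_support {z | (α z : ℕ) ≤ c} hp hq hpc hcq.not_ge
  have := (abs_sub_le_iff.1 (hα z d hzd)).2
  simp only [Set.mem_ofPred_eq, not_le] at hzc hdc
  exact ⟨z, hz, by omega, hzc⟩

theorem SimpleGraph.Walk.exists_mem_support_mem_Icc_of_passThrough
    (hα : layoutBandwidthLE G α b) {u v x y : V} (w : G.Walk x y)
    (hpass : inclInterval α {u, v} ⊆ inclInterval α {z | z ∈ w.support})
    (hu : u ∉ w.support) (hv : v ∉ w.support) :
    ∃ z ∈ w.support,
      (α z : ℕ) ∈ Set.Icc (max (α u : ℕ) (α v) + 1 - b) (max (α u : ℕ) (α v)) := by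
  have hS : {z | z ∈ w.support}.Nonempty := ⟨x, w.start_mem_support⟩
  have hmax := hpass (inclInterval_pair α u v ▸ Set.right_mem_Icc.2 min_le_max)
  have hmax_ne : ∀ z ∈ w.support, (α z : ℕ) ≠ max (α u : ℕ) (α v) := by
    intro z hz h
    obtain h' | h' := max_choice (α u : ℕ) (α v)
    · exact hu (α.injective (Fin.ext (h.trans h')) ▸ hz)
    · exact hv (α.injective (Fin.ext (h.trans h')) ▸ hz)
  obtain ⟨p, hp, hpi⟩ := exists_le_of_mem_inclInterval hS hmax
  obtain ⟨q, hq, hqi⟩ := exists_lt_of_mem_inclInterval hS hmax hmax_ne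
  exact w.exists_mem_support_mem_Icc_of_layoutBandwidthLE hα hp hq hpi hqi

theorem card_add_sum_card_mem_Icc_le [DecidableEq V] {ι : Type*} [Fintype ι] {xs ys : ι → V}
    (P : ∀ i, G.Walk (xs i) (ys i))
    (hPdisj : ∀ i j, i ≠ j → ∀ w, w ∈ (P i).support → w ∉ (P j).support)
    {A : Finset V} (hAP : ∀ i, ∀ w ∈ A, w ∉ (P i).support) {a c : ℕ}
    (hA : ∀ w ∈ A, (α w : ℕ) ∈ Set.Icc a c) :
    #A + ∑ i, #{w ∈ (P i).support.toFinset | (α w : ℕ) ∈ Set.Icc a c} ≤ c + 1 - a := by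
  rw [← Nat.card_Icc]
  refine card_add_sum_card_le_of_injective (f := fun w => (α w : ℕ))
    (Fin.val_injective.comp α.injective) ?_ ?_ (fun w hw => by simpa using hA w hw) ?_
  · exact fun i j hij => disjoint_left.2 fun w hwi hwj =>
      hPdisj i j hij w (by simpa using (mem_filter.1 hwi).1) (by simpa using (mem_filter.1 hwj).1)
  · exact fun i => disjoint_left.2 fun w hwA hwP =>
      hAP i w hwA (by simpa using (mem_filter.1 hwP).1)
  · exact fun i w hw => by simpa using (mem_filter.1 hw).2

theorem card_filter_support_mem_Icc_eq_one [DecidableEq V] {ι : Type*} [Fintype ι]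
    {xs ys : ι → V} (P : ∀ i, G.Walk (xs i) (ys i))
    (hPdisj : ∀ i j, i ≠ j → ∀ w, w ∈ (P i).support → w ∉ (P j).support)
    {A : Finset V} (hAP : ∀ i, ∀ w ∈ A, w ∉ (P i).support) {lo hi : ℕ}
    (hAI : ∀ w ∈ A, (α w : ℕ) ∈ Set.Icc lo hi) (hwidth : hi ≤ lo + b)
    (hAcard : b + 1 ≤ #A + Fintype.card ι)
    (hP : ∀ i, ∃ w ∈ (P i).support, (α w : ℕ) ∈ Set.Icc (hi + 1 - b) hi) (i : ι) :
    #{w ∈ (P i).support.toFinset | (α w : ℕ) ∈ Set.Icc lo hi} = 1 := by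
  let Q (a : ℕ) (i : ι) := {w ∈ (P i).support.toFinset | (α w : ℕ) ∈ Set.Icc a hi}
  have hQ : ∀ a ≤ hi + 1 - b, ∀ i, (Q a i).Nonempty := fun a ha i => by
    obtain ⟨w, hw, hwI⟩ := hP i
    exact ⟨w, by simpa [Q, hw] using ⟨ha.trans hwI.1, hwI.2⟩⟩
  -- otherwise the `b` positions from `hi + 1 - b` to `hi` would hold `A` and a vertex of each path
  have hwidth_eq : hi = lo + b := by
    by_contra hne
    have : #A + ∑ i, #(Q (hi + 1 - b) i) ≤ hi + 1 - (hi + 1 - b) :=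
      card_add_sum_card_mem_Icc_le P hPdisj hAP fun w hw =>
        ⟨by have := (hAI w hw).1; omega, (hAI w hw).2⟩
    have := card_le_sum_card_of_nonempty (hQ _ le_rfl)
    omega
  refine card_eq_one_of_sum_card_le (Q := Q lo) (hQ lo (by omega)) ?_ i
  have : #A + ∑ i, #(Q lo i) ≤ hi + 1 - lo := card_add_sum_card_mem_Icc_le P hPdisj hAP hAI
  omega

end Layout

theorem no_jumping_general {V : Type} [Fintype V] (T : SimpleGraph V) (b k : ℕ)
    (α : V ≃ Fin (Fintype.card V)) (hα : layoutBandwidthLE T α b)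
    (u v : V) (huv : T.Adj u v)
    (xs ys : Fin k → V) (P : ∀ i, T.Walk (xs i) (ys i))
    (hPdisj : ∀ i j, i ≠ j → ∀ w, w ∈ (P i).support → w ∉ (P j).support)
    (hPuv : ∀ i, u ∉ (P i).support ∧ v ∉ (P i).support)
    (hpass : ∀ i, inclInterval α {u, v} ⊆ inclInterval α {w | w ∈ (P i).support})
    (X : Finset V) (hXu : u ∉ X) (hXv : v ∉ X)
    (hXP : ∀ i, ∀ w ∈ X, w ∉ (P i).support)
    (hXcard : (b : ℤ) - (k : ℤ) - 1 ≤ (X.card : ℤ))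
    (hXI : ∀ w ∈ X, (α w : ℕ) ∈ inclInterval α {u, v}) :
    ∀ i, ∃! w : V, w ∈ (P i).support ∧ (α w : ℕ) ∈ inclInterval α {u, v} := by
  classical
  set lo := min (α u : ℕ) (α v)
  set hi := max (α u : ℕ) (α v)
  have hI : inclInterval α {u, v} = Set.Icc lo hi := inclInterval_pair α u v
  have hwidth : hi ≤ lo + b := by have := abs_sub_le_iff.1 (hα u v huv); omega
  let A : Finset V := insert u (insert v X)
  have hAcard : b + 1 ≤ #A + k := by
    rw [card_insert_of_notMem (by simp [huv.ne, hXu]), card_insert_of_notMem hXv]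
    omega
  have hAP : ∀ i, ∀ w ∈ A, w ∉ (P i).support := by
    simpa [A] using fun i => ⟨(hPuv i).1, (hPuv i).2, hXP i⟩
  have hAI : ∀ w ∈ A, (α w : ℕ) ∈ Set.Icc lo hi := by
    simp only [A, mem_insert, forall_eq_or_imp, ← hI]
    exact ⟨mem_inclInterval_of_mem (by simp), mem_inclInterval_of_mem (by simp), hXI⟩
  have hnear : ∀ i, ∃ w ∈ (P i).support, (α w : ℕ) ∈ Set.Icc (hi + 1 - b) hi := fun i =>
    (P i).exists_mem_support_mem_Icc_of_passThrough hα (hpass i) (hPuv i).1 (hPuv i).2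
  intro i
  simpa only [hI, mem_filter, List.mem_toFinset] using card_eq_one_iff_existsUnique.1
    (card_filter_support_mem_Icc_eq_one P hPdisj hAP hAI hwidth (by simpa using hAcard) hnear i)

/-- If `k` disjoint paths pass through an edge `uv` in a bandwidth-`b` layout, and a
disjoint vertex set `X` with `|X| ≥ b - k - 1` is mapped into `I({u,v})`, then each
path has exactly one vertex mapped into `I({u,v})`. -/
theorem no_jumping {V : Type} [Fintype V] (T : SimpleGraph V) (b k : ℕ)
    (α : V ≃ Fin (Fintype.card V)) (hα : layoutBandwidthLE T α b)
    (u v : V) (huv : T.Adj u v)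
    (xs ys : Fin k → V) (P : ∀ i, T.Walk (xs i) (ys i)) (hP : ∀ i, (P i).IsPath)
    (hPdisj : ∀ i j, i ≠ j → ∀ w, w ∈ (P i).support → w ∉ (P j).support)
    (hPuv : ∀ i, u ∉ (P i).support ∧ v ∉ (P i).support)
    (hpass : ∀ i, inclInterval α {u, v} ⊆ inclInterval α {w | w ∈ (P i).support})
    (X : Finset V) (hXu : u ∉ X) (hXv : v ∉ X)
    (hXP : ∀ i, ∀ w ∈ X, w ∉ (P i).support)
    (hXcard : (b : ℤ) - (k : ℤ) - 1 ≤ (X.card : ℤ))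
    (hXI : ∀ w ∈ X, (α w : ℕ) ∈ inclInterval α {u, v}) :
    ∀ i, ∃! w : V, w ∈ (P i).support ∧ (α w : ℕ) ∈ inclInterval α {u, v} :=
  no_jumping_general T b k α hα u v huv xs ys P hPdisj hPuv hpass X hXu hXv hXP hXcard hXI
end

section
/- Let T be a graph with bandwidth-b layout α, containing disjoint subpaths P̂ (with l vertices v₁,...,v_l) and P¹,...,Pᵏ, each Pⁱ passing through P̂ in α, and a vertex set X disjoint from all these paths with |X| ≥ (l−1)(b−k−1) and α(X) ⊆ I(P̂). Then P̂ is stretched with respect to α: |α(v_{i+1}) − α(v_i)| = b for every i, and in particular either α(v₁) < α(v₂) < ... < α(v_l) or α(v_l) < ... < α(v₁). -/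
namespace PPWB

variable {V : Type} [Fintype V] {T : SimpleGraph V} {b : ℕ}
    {α : V ≃ Fin (Fintype.card V)}

lemma cross_above (hα : layoutBandwidthLE T α b)
    {x y : V} (w : T.Walk x y) (c : ℤ) (hx : (α x : ℤ) ≤ c)
    (hv : ∃ v ∈ w.support, c < (α v : ℤ)) :
    ∃ u ∈ w.support, c < (α u : ℤ) ∧ (α u : ℤ) ≤ c + b := by
  induction w with
  | nil =>
    obtain ⟨v, hv1, hv2⟩ := hv
    simp only [SimpleGraph.Walk.support_nil, List.mem_singleton] at hv1
    subst hv1; omega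
  | @cons x x' y h q ih =>
    by_cases hx' : (α x' : ℤ) ≤ c
    · obtain ⟨v, hv1, hv2⟩ := hv
      have hvx : v ≠ x := by rintro rfl; omega
      have hvs : v ∈ q.support := by
        simp only [SimpleGraph.Walk.support_cons, List.mem_cons] at hv1
        tauto
      obtain ⟨u, h1, h2, h3⟩ := ih hx' ⟨v, hvs, hv2⟩
      exact ⟨u, by simp [SimpleGraph.Walk.support_cons, h1], h2, h3⟩
    · refine ⟨x', by simp [SimpleGraph.Walk.support_cons, q.start_mem_support], by omega, ?_⟩
      have hb := hα x x' h
      rw [abs_le] at hb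
      omega

lemma cross_below (hα : layoutBandwidthLE T α b)
    {x y : V} (w : T.Walk x y) (c : ℤ) (hx : c < (α x : ℤ))
    (hu : ∃ u ∈ w.support, (α u : ℤ) ≤ c) :
    ∃ u ∈ w.support, c < (α u : ℤ) ∧ (α u : ℤ) ≤ c + b := by
  induction w with
  | nil =>
    obtain ⟨v, hv1, hv2⟩ := hu
    simp only [SimpleGraph.Walk.support_nil, List.mem_singleton] at hv1
    subst hv1; omega
  | @cons x x' y h q ih =>
    by_cases hxb : (α x : ℤ) ≤ c + b
    · exact ⟨x, by simp [SimpleGraph.Walk.support_cons], hx, hxb⟩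
    · have hb := hα x x' h
      rw [abs_le] at hb
      have hx' : c < (α x' : ℤ) := by omega
      obtain ⟨v, hv1, hv2⟩ := hu
      have hvx : v ≠ x := by rintro rfl; omega
      have hvs : v ∈ q.support := by
        simp only [SimpleGraph.Walk.support_cons, List.mem_cons] at hv1
        tauto
      obtain ⟨u, h1, h2, h3⟩ := ih hx' ⟨v, hvs, hv2⟩
      exact ⟨u, by simp [SimpleGraph.Walk.support_cons, h1], h2, h3⟩

lemma cross (hα : layoutBandwidthLE T α b)
    {x y : V} (w : T.Walk x y) (c : ℤ)
    (hu : ∃ u ∈ w.support, (α u : ℤ) ≤ c)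
    (hv : ∃ v ∈ w.support, c < (α v : ℤ)) :
    ∃ u ∈ w.support, c < (α u : ℤ) ∧ (α u : ℤ) ≤ c + b := by
  by_cases hx : (α x : ℤ) ≤ c
  · exact cross_above hα w c hx hv
  · exact cross_below hα w c (by omega) hu

lemma all_eq_of_sum {n : ℕ} {f : ℕ → ℤ} {b : ℤ}
    (hle : ∀ i ∈ Finset.range n, f i ≤ b)
    (hsum : (n : ℤ) * b ≤ ∑ i ∈ Finset.range n, f i) :
    ∀ i ∈ Finset.range n, f i = b := by
  by_contra hc
  push_neg at hc
  obtain ⟨i, hi, hne⟩ := hc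
  have hlt : f i < b := lt_of_le_of_ne (hle i hi) hne
  have : ∑ j ∈ Finset.range n, f j < ∑ j ∈ Finset.range n, b :=
    Finset.sum_lt_sum hle ⟨i, hi, hlt⟩
  rw [Finset.sum_const, Finset.card_range, nsmul_eq_mul] at this
  omega

end PPWB

/-- Passing paths are well behaved: if `k` disjoint paths pass through an `l`-vertex
path `p 0, ..., p (l-1)` in a bandwidth-`b` layout, and a disjoint vertex set `X` with
`|X| ≥ (l-1)(b-k-1)` is mapped into its inclusion interval, then the path is
stretched: consecutive vertices are exactly `b` apart, and in particular the layout is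
strictly monotone (increasing or decreasing) along the path. -/
theorem passing_paths_are_well_behaved {V : Type} [Fintype V] (T : SimpleGraph V)
    (b k l : ℕ)
    (α : V ≃ Fin (Fintype.card V)) (hα : layoutBandwidthLE T α b)
    (p : ℕ → V)
    (hadj : ∀ i, i + 1 < l → T.Adj (p i) (p (i + 1)))
    (hpinj : ∀ i j, i < l → j < l → p i = p j → i = j)
    (xs ys : Fin k → V) (P : ∀ i, T.Walk (xs i) (ys i)) (hP : ∀ i, (P i).IsPath)
    (hPdisj : ∀ i j, i ≠ j → ∀ w, w ∈ (P i).support → w ∉ (P j).support)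
    (hPp : ∀ i, ∀ j, j < l → p j ∉ (P i).support)
    (hpass : ∀ i, inclInterval α (p '' {j | j < l}) ⊆
        inclInterval α {w | w ∈ (P i).support})
    (X : Finset V)
    (hXp : ∀ j, j < l → p j ∉ X)
    (hXP : ∀ i, ∀ w ∈ X, w ∉ (P i).support)
    (hXcard : ((l : ℤ) - 1) * ((b : ℤ) - (k : ℤ) - 1) ≤ (X.card : ℤ))
    (hXI : ∀ w ∈ X, (α w : ℕ) ∈ inclInterval α (p '' {j | j < l})) :
    (∀ i, i + 1 < l → |(α (p (i + 1)) : ℤ) - (α (p i) : ℤ)| = (b : ℤ)) ∧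
    ((∀ i j, i < j → j < l → α (p i) < α (p j)) ∨
     (∀ i j, i < j → j < l → α (p j) < α (p i))) := by
  classical
  rcases Nat.lt_or_ge l 2 with hl | hl
  · exact ⟨fun i hi => absurd hi (by omega),
      Or.inl (fun i j hij hjl => absurd hjl (by omega))⟩
  -- 2 ≤ l
  have posinj : ∀ u w : V, ((α u : ℕ) : ℤ) = ((α w : ℕ) : ℤ) → u = w := by
    intro u w h
    exact α.injective (Fin.ext (by exact_mod_cast h))
  have hb1 : 1 ≤ b := by
    by_contra hb
    have h01 := hα (p 0) (p 1) (hadj 0 (by omega))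
    rw [abs_le] at h01
    have : p 0 = p 1 := posinj _ _ (by omega)
    have := hpinj 0 1 (by omega) (by omega) this
    omega
  set S : Set ℕ := (fun x => (α x : ℕ)) '' (p '' {j | j < l}) with hSdef
  have hSfin : S.Finite := ((Set.finite_Iio l).image p).image _
  have hSne : S.Nonempty := ⟨(α (p 0) : ℕ), ⟨p 0, ⟨0, show 0 < l by omega, rfl⟩, rfl⟩⟩
  have hSbdd : BddAbove S := hSfin.bddAbove
  set m := sInf S with hmdef
  set M := sSup S with hMdef
  have hmle : ∀ j, j < l → m ≤ (α (p j) : ℕ) :=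
    fun j hj => Nat.sInf_le ⟨p j, ⟨j, hj, rfl⟩, rfl⟩
  have hleM : ∀ j, j < l → (α (p j) : ℕ) ≤ M :=
    fun j hj => le_csSup hSbdd ⟨p j, ⟨j, hj, rfl⟩, rfl⟩
  have hmM : m ≤ M := le_trans (hmle 0 (by omega)) (hleM 0 (by omega))
  -- attainers of min and max
  obtain ⟨_, ⟨a, hal, rfl⟩, hma⟩ := Nat.sInf_mem hSne
  obtain ⟨_, ⟨c, hcl, rfl⟩, hMc⟩ := Nat.sSup_mem hSne hSbdd
  have hal' : a < l := hal
  have hcl' : c < l := hcl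
  simp only [] at hma hMc
  -- X positions lie in [m, M]
  have hXin : ∀ w ∈ X, m ≤ (α w : ℕ) ∧ (α w : ℕ) ≤ M := by
    intro w hw
    have h := hXI w hw
    unfold inclInterval at h
    rw [← hSdef, ← hmdef, ← hMdef] at h
    exact Set.mem_Icc.mp h
  -- crossing vertices for each passing path
  have hcross : ∀ (i : Fin k) (z : ℤ), (m : ℤ) - 1 ≤ z → z ≤ (M : ℤ) →
      ∃ u ∈ (P i).support, z < (α u : ℤ) ∧ (α u : ℤ) ≤ z + (b : ℤ) := by
    intro i z hz1 hz2
    have hSine : ((fun x => (α x : ℕ)) '' {w | w ∈ (P i).support}).Nonempty :=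
      ⟨_, ⟨xs i, (P i).start_mem_support, rfl⟩⟩
    have hSibdd : BddAbove ((fun x => (α x : ℕ)) '' {w | w ∈ (P i).support}) :=
      (Set.toFinite _).bddAbove
    have hmmem : m ∈ inclInterval α {w | w ∈ (P i).support} := by
      apply hpass i
      unfold inclInterval
      rw [← hSdef, ← hmdef, ← hMdef]
      exact Set.mem_Icc.mpr ⟨le_rfl, hmM⟩
    have hMmem : M ∈ inclInterval α {w | w ∈ (P i).support} := by
      apply hpass i
      unfold inclInterval
      rw [← hSdef, ← hmdef, ← hMdef]
      exact Set.mem_Icc.mpr ⟨hmM, le_rfl⟩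
    unfold inclInterval at hmmem hMmem
    rw [Set.mem_Icc] at hmmem hMmem
    obtain ⟨u, hus, huv⟩ := Nat.sInf_mem hSine
    obtain ⟨v, hvs, hvv⟩ := Nat.sSup_mem hSine hSibdd
    simp only [] at huv hvv
    have hus' : u ∈ (P i).support := hus
    have hvs' : v ∈ (P i).support := hvs
    have hune : (α u : ℕ) ≠ m := by
      intro he
      have : u = p a := posinj u (p a) (by exact_mod_cast he.trans hma.symm)
      exact hPp i a hal' (by rw [← this]; exact hus')
    have hvne : (α v : ℕ) ≠ M := by
      intro he
      have : v = p c := posinj v (p c) (by exact_mod_cast he.trans hMc.symm)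
      exact hPp i c hcl' (by rw [← this]; exact hvs')
    have hum : (α u : ℕ) ≤ m := huv.le.trans hmmem.1
    have hvM : M ≤ (α v : ℕ) := hMmem.2.trans hvv.ge
    apply PPWB.cross hα (P i) z
    · exact ⟨u, hus', by push_cast; omega⟩
    · exact ⟨v, hvs', by push_cast; omega⟩
  -- span is at least (l-1)*b
  have hMge : m + (l - 1) * b ≤ M := by
    by_contra hcon
    push_neg at hcon
    obtain ⟨s, hs⟩ : ∃ s, m + s = M := ⟨M - m, by omega⟩
    have hcon' : s < (l - 1) * b := by omega
    set J : ℕ := (s + b) / b with hJdef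
    have hq := Nat.div_add_mod (s + b) b
    rw [← hJdef] at hq
    clear_value J
    clear hJdef
    have hr : (s + b) % b < b := Nat.mod_lt _ (by omega)
    have hF1 : s < b * J := by linarith
    have hqb : b * J ≤ s + b := Nat.le.intro hq
    have hJpos : 1 ≤ J := by
      by_contra h0
      have : J = 0 := by omega
      rw [this, Nat.mul_zero] at hF1
      omega
    have hJl : J < l := by
      have hc2 : (l - 1) * b + b = l * b := by
        have h3 : l - 1 + 1 = l := by omega
        calc (l - 1) * b + b = (l - 1 + 1) * b := by ring
          _ = l * b := by rw [h3]
      have : b * J < b * l := by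
        have : b * J < l * b := by linarith
        linarith [mul_comm b l]
      exact Nat.lt_of_mul_lt_mul_left this
    -- blocked positions
    set PF : Finset V := (Finset.range l).image p with hPFdef
    have hPFcard : PF.card = l := by
      rw [hPFdef, Finset.card_image_of_injOn, Finset.card_range]
      intro i hi j hj hij
      exact hpinj i j (Finset.mem_range.mp hi) (Finset.mem_range.mp hj) hij
    have hPFX : Disjoint PF X := by
      rw [Finset.disjoint_left]
      intro v hv hvX
      obtain ⟨j, hj, rfl⟩ := Finset.mem_image.mp hv
      exact hXp j (Finset.mem_range.mp hj) hvX
    set B : Finset ℤ := (PF ∪ X).image (fun v => ((α v : ℕ) : ℤ)) with hBdef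
    have hBcard : B.card = l + X.card := by
      rw [hBdef, Finset.card_image_of_injective _ (fun u w h => posinj u w h),
        Finset.card_union_of_disjoint hPFX, hPFcard]
    have hBrange : ∀ z ∈ B, (m : ℤ) ≤ z ∧ z ≤ (M : ℤ) := by
      intro z hz
      obtain ⟨v, hv, rfl⟩ := Finset.mem_image.mp hz
      rcases Finset.mem_union.mp hv with hvPF | hvX
      · obtain ⟨j, hj, rfl⟩ := Finset.mem_image.mp hvPF
        have h1 := hmle j (Finset.mem_range.mp hj)
        have h2 := hleM j (Finset.mem_range.mp hj)
        constructor <;> push_cast <;> omega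
      · have := hXin v hvX
        constructor <;> push_cast <;> omega
    -- windows
    set W : ℕ → Finset ℤ := fun j => Finset.Ioc ((m : ℤ) - 1 + j * b) ((m : ℤ) - 1 + j * b + b)
      with hWdef
    have hWcard : ∀ j : ℕ, (W j).card = b := by
      intro j
      rw [hWdef]
      simp only []
      rw [Int.card_Ioc]
      have : (m : ℤ) - 1 + j * b + b - ((m : ℤ) - 1 + j * b) = (b : ℤ) := by ring
      rw [this, Int.toNat_natCast]
    have hwin : ∀ j, j < J → (B ∩ W j).card + k ≤ b := by
      intro j hj
      have hjb : b * j ≤ s := by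
        have h1 : b * j ≤ b * (J - 1) := Nat.mul_le_mul_left _ (by omega)
        have h2 : b * (J - 1) + b = b * J := by
          have h3 : J - 1 + 1 = J := by omega
          calc b * (J - 1) + b = b * (J - 1 + 1) := by ring
            _ = b * J := by rw [h3]
        linarith
      have hjbz : (j : ℤ) * b ≤ (s : ℤ) := by
        have : ((b * j : ℕ) : ℤ) ≤ (s : ℤ) := by exact_mod_cast hjb
        push_cast at this
        linarith
      have hsM : (m : ℤ) + s = M := by exact_mod_cast hs
      have hc1 : (m : ℤ) - 1 ≤ (m : ℤ) - 1 + j * b := by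
        have : (0 : ℤ) ≤ (j : ℤ) * b := by positivity
        linarith
      have hc2 : (m : ℤ) - 1 + j * b ≤ (M : ℤ) := by linarith
      choose f hf1 hf2 hf3 using fun i : Fin k => hcross i ((m : ℤ) - 1 + j * b) hc1 hc2
      have hfinj : Function.Injective (fun i : Fin k => ((α (f i) : ℕ) : ℤ)) := by
        intro i i' h
        by_contra hne
        exact hPdisj i i' hne (f i) (hf1 i) (by rw [posinj _ _ h]; exact hf1 i')
      set C : Finset ℤ := Finset.image (fun i : Fin k => ((α (f i) : ℕ) : ℤ)) Finset.univ
        with hCdef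
      have hCcard : C.card = k := by
        rw [hCdef, Finset.card_image_of_injective _ hfinj, Finset.card_univ,
          Fintype.card_fin]
      have hCsub : C ⊆ W j := by
        intro z hz
        obtain ⟨i, _, rfl⟩ := Finset.mem_image.mp hz
        exact Finset.mem_Ioc.mpr ⟨hf2 i, hf3 i⟩
      have hdisj : Disjoint (B ∩ W j) C := by
        rw [Finset.disjoint_left]
        intro z hz hzC
        obtain ⟨i, _, hieq⟩ := Finset.mem_image.mp hzC
        obtain ⟨v, hv, hveq⟩ := Finset.mem_image.mp (Finset.mem_inter.mp hz).1
        have hvf : v = f i := posinj _ _ (by rw [hveq, hieq])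
        rcases Finset.mem_union.mp hv with hvPF | hvX
        · obtain ⟨j', hj', rfl⟩ := Finset.mem_image.mp hvPF
          exact hPp i j' (Finset.mem_range.mp hj') (by rw [hvf]; exact hf1 i)
        · exact hXP i v hvX (by rw [hvf]; exact hf1 i)
      calc (B ∩ W j).card + k = (B ∩ W j).card + C.card := by rw [hCcard]
        _ = ((B ∩ W j) ∪ C).card := (Finset.card_union_of_disjoint hdisj).symm
        _ ≤ (W j).card := Finset.card_le_card
              (Finset.union_subset Finset.inter_subset_right hCsub)
        _ = b := hWcard j
    -- coverage
    have hBsub : ∀ z ∈ B, ∃ j, j < J ∧ z ∈ W j := by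
      intro z hz
      obtain ⟨hz1, hz2⟩ := hBrange z hz
      have hsM : (m : ℤ) + s = M := by exact_mod_cast hs
      obtain ⟨t, ht⟩ : ∃ t : ℕ, z = (m : ℤ) + t := ⟨(z - m).toNat, by omega⟩
      have hts : t ≤ s := by omega
      refine ⟨t / b, ?_, ?_⟩
      · have h1 : b * (t / b) ≤ t := Nat.mul_div_le t b
        have : b * (t / b) < b * J := by linarith
        exact Nat.lt_of_mul_lt_mul_left this
      · have hdj := Nat.div_add_mod t b
        have hmod : t % b < b := Nat.mod_lt _ (by omega)
        have h1 : ((b : ℤ)) * ((t / b : ℕ) : ℤ) + ((t % b : ℕ) : ℤ) = (t : ℤ) := by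
          exact_mod_cast hdj
        have h2 : ((t % b : ℕ) : ℤ) < (b : ℤ) := by exact_mod_cast hmod
        have hcm : ((t / b : ℕ) : ℤ) * (b : ℤ) = ((b : ℤ)) * ((t / b : ℕ) : ℤ) :=
          mul_comm _ _
        show z ∈ Finset.Ioc ((m : ℤ) - 1 + ((t / b : ℕ) : ℤ) * b)
          ((m : ℤ) - 1 + ((t / b : ℕ) : ℤ) * b + b)
        rw [Finset.mem_Ioc]
        constructor <;> linarith [h1, h2, ht, hcm]
    have hcard1 : B.card ≤ J * (b - k) := by
      have hBsub' : B ⊆ (Finset.range J).biUnion (fun j => B ∩ W j) := by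
        intro z hz
        obtain ⟨j, hj, hjW⟩ := hBsub z hz
        exact Finset.mem_biUnion.mpr ⟨j, Finset.mem_range.mpr hj,
          Finset.mem_inter.mpr ⟨hz, hjW⟩⟩
      calc B.card ≤ ((Finset.range J).biUnion (fun j => B ∩ W j)).card :=
            Finset.card_le_card hBsub'
        _ ≤ ∑ j ∈ Finset.range J, (B ∩ W j).card := Finset.card_biUnion_le
        _ ≤ ∑ _j ∈ Finset.range J, (b - k) := Finset.sum_le_sum (fun j hj => by
              have := hwin j (Finset.mem_range.mp hj); omega)
        _ = J * (b - k) := by rw [Finset.sum_const, Finset.card_range, smul_eq_mul]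
    have hkb : k ≤ b := by
      have := hwin 0 hJpos
      omega
    have h1 : (l : ℤ) + (X.card : ℤ) ≤ (J : ℤ) * ((b : ℤ) - k) := by
      have h2 : ((J * (b - k) : ℕ) : ℤ) = (J : ℤ) * ((b : ℤ) - k) := by
        push_cast [Nat.cast_sub hkb]
        ring
      have h3 : (B.card : ℤ) ≤ ((J * (b - k) : ℕ) : ℤ) := by exact_mod_cast hcard1
      rw [h2] at h3
      rw [hBcard] at h3
      push_cast at h3
      linarith
    have hJl2 : (J : ℤ) ≤ (l : ℤ) - 1 := by
      have : (J : ℤ) < (l : ℤ) := by exact_mod_cast hJl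
      omega
    have hbk : (0 : ℤ) ≤ (b : ℤ) - k := by
      have : (k : ℤ) ≤ (b : ℤ) := by exact_mod_cast hkb
      omega
    have hmulJ : (J : ℤ) * ((b : ℤ) - k) ≤ ((l : ℤ) - 1) * ((b : ℤ) - k) :=
      mul_le_mul_of_nonneg_right hJl2 hbk
    have hkey : ((l : ℤ) - 1) * ((b : ℤ) - k) =
        ((l : ℤ) - 1) * ((b : ℤ) - k - 1) + ((l : ℤ) - 1) := by ring
    have hl2 : (2 : ℤ) ≤ (l : ℤ) := by exact_mod_cast hl
    linarith
  -- telescoping bound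
  have htele : ∀ i d : ℕ, i + d < l → |(α (p (i + d)) : ℤ) - (α (p i) : ℤ)| ≤ (d : ℤ) * b := by
    intro i d
    induction d with
    | zero => intro _; simp
    | succ d ih =>
      intro hd
      have h1 := ih (by omega)
      have h2 := hα (p (i + d + 1)) (p (i + d)) ((hadj (i + d) (by omega)).symm)
      have hgoal : i + (d + 1) = i + d + 1 := by omega
      rw [hgoal]
      have hexp : ((d : ℤ) + 1) * b = (d : ℤ) * b + b := by ring
      rw [abs_le] at h1 h2 ⊢
      push_cast
      constructor <;> linarith [h1.1, h1.2, h2.1, h2.2]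
  -- span equals (l-1)*b at the endpoints
  have hbz : (0 : ℤ) < (b : ℤ) := by exact_mod_cast hb1
  have hl1 : ((l - 1 : ℕ) : ℤ) = (l : ℤ) - 1 := by
    push_cast [Nat.cast_sub (by omega : 1 ≤ l)]; ring
  have hMgeZ : (m : ℤ) + ((l : ℤ) - 1) * b ≤ (M : ℤ) := by
    have : ((m + (l - 1) * b : ℕ) : ℤ) ≤ (M : ℤ) := by exact_mod_cast hMge
    push_cast [Nat.cast_sub (by omega : 1 ≤ l)] at this
    linarith
  have haM' : ((α (p a)) : ℤ) = (m : ℤ) := by exact_mod_cast hma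
  have hcM' : ((α (p c)) : ℤ) = (M : ℤ) := by exact_mod_cast hMc
  have hAC : ((α (p (l - 1)) : ℤ) - (α (p 0) : ℤ) = ((l : ℤ) - 1) * b) ∨
      ((α (p 0) : ℤ) - (α (p (l - 1)) : ℤ) = ((l : ℤ) - 1) * b) := by
    rcases le_or_gt a c with hac | hca
    · left
      have h1 := htele a (c - a) (by omega)
      rw [Nat.add_sub_cancel' hac] at h1
      rw [hcM', haM'] at h1
      rw [abs_of_nonneg (by linarith : (0 : ℤ) ≤ (M : ℤ) - (m : ℤ))] at h1
      have h2 : ((l : ℤ) - 1) * b ≤ ((c - a : ℕ) : ℤ) * b := by linarith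
      have h3 : (l : ℤ) - 1 ≤ ((c - a : ℕ) : ℤ) := le_of_mul_le_mul_right h2 hbz
      have hc0 : a = 0 ∧ c = l - 1 := by omega
      obtain ⟨rfl, rfl⟩ := hc0
      have h4 := htele 0 (l - 1) (by omega)
      simp only [Nat.zero_add] at h4
      rw [hcM', haM', hl1, abs_le] at h4
      rw [hcM', haM']
      linarith [h4.2]
    · right
      have h1 := htele c (a - c) (by omega)
      rw [Nat.add_sub_cancel' hca.le] at h1
      rw [haM', hcM'] at h1
      rw [abs_sub_comm, abs_of_nonneg (by linarith : (0 : ℤ) ≤ (M : ℤ) - (m : ℤ))] at h1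
      have h2 : ((l : ℤ) - 1) * b ≤ ((a - c : ℕ) : ℤ) * b := by linarith
      have h3 : (l : ℤ) - 1 ≤ ((a - c : ℕ) : ℤ) := le_of_mul_le_mul_right h2 hbz
      have hc0 : c = 0 ∧ a = l - 1 := by omega
      obtain ⟨rfl, rfl⟩ := hc0
      have h4 := htele 0 (l - 1) (by omega)
      simp only [Nat.zero_add] at h4
      rw [haM', hcM', hl1, abs_le] at h4
      rw [haM', hcM']
      linarith [h4.1]
  rcases hAC with hpos | hneg
  · -- increasing case
    have hsteps : ∀ i ∈ Finset.range (l - 1),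
        ((α (p (i + 1)) : ℤ) - (α (p i) : ℤ)) = (b : ℤ) := by
      apply PPWB.all_eq_of_sum
      · intro i hi
        have hi' := Finset.mem_range.mp hi
        have := hα (p (i + 1)) (p i) ((hadj i (by omega)).symm)
        rw [abs_le] at this
        exact this.2
      · rw [Finset.sum_range_sub (fun i => ((α (p i)) : ℤ))]
        rw [hl1, hpos]
    refine ⟨?_, Or.inl ?_⟩
    · intro i hi
      have := hsteps i (Finset.mem_range.mpr (by omega))
      rw [this]
      exact abs_of_nonneg (by positivity)
    · have hmono : ∀ j, j < l → ((α (p j)) : ℤ) = ((α (p 0)) : ℤ) + (j : ℤ) * b := by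
        intro j
        induction j with
        | zero => intro _; simp
        | succ j ih =>
          intro hj
          have h1 := ih (by omega)
          have h2 := hsteps j (Finset.mem_range.mpr (by omega))
          have hexp : ((j : ℤ) + 1) * b = (j : ℤ) * b + b := by ring
          push_cast
          linarith
      intro i j hij hjl
      have h1 := hmono i (by omega)
      have h2 := hmono j hjl
      have h3 : (i : ℤ) * b < (j : ℤ) * b := by
        apply mul_lt_mul_of_pos_right _ hbz
        exact_mod_cast hij
      have hlt : ((α (p i)) : ℤ) < ((α (p j)) : ℤ) := by linarith
      have : ((α (p i)) : ℕ) < ((α (p j)) : ℕ) := by exact_mod_cast hlt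
      exact this
  · -- decreasing case
    have hsteps : ∀ i ∈ Finset.range (l - 1),
        ((α (p i) : ℤ) - (α (p (i + 1)) : ℤ)) = (b : ℤ) := by
      apply PPWB.all_eq_of_sum
      · intro i hi
        have hi' := Finset.mem_range.mp hi
        have := hα (p i) (p (i + 1)) (hadj i (by omega))
        rw [abs_le] at this
        exact this.2
      · rw [Finset.sum_range_sub' (fun i => ((α (p i)) : ℤ))]
        rw [hl1, hneg]
    refine ⟨?_, Or.inr ?_⟩
    · intro i hi
      have := hsteps i (Finset.mem_range.mpr (by omega))
      have h2 : (α (p (i + 1)) : ℤ) - (α (p i) : ℤ) = -(b : ℤ) := by linarith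
      rw [h2, abs_neg]
      exact abs_of_nonneg (by positivity)
    · have hmono : ∀ j, j < l → ((α (p j)) : ℤ) = ((α (p 0)) : ℤ) - (j : ℤ) * b := by
        intro j
        induction j with
        | zero => intro _; simp
        | succ j ih =>
          intro hj
          have h1 := ih (by omega)
          have h2 := hsteps j (Finset.mem_range.mpr (by omega))
          have hexp : ((j : ℤ) + 1) * b = (j : ℤ) * b + b := by ring
          push_cast
          linarith
      intro i j hij hjl
      have h1 := hmono i (by omega)
      have h2 := hmono j hjl
      have h3 : (i : ℤ) * b < (j : ℤ) * b := by
        apply mul_lt_mul_of_pos_right _ hbz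
        exact_mod_cast hij
      have hlt : ((α (p j)) : ℤ) < ((α (p i)) : ℤ) := by linarith
      have : ((α (p j)) : ℕ) < ((α (p i)) : ℕ) := by exact_mod_cast hlt
      exact this
end

section
/- For all integers b ≥ k ≥ 1, every skewed b-Cantor comb of depth k has bandwidth at least k. -/
/-- The bandwidth of a finite graph. -/
noncomputable def graphBandwidth {V : Type} [Fintype V] (G : SimpleGraph V) : ℕ :=
  sInf {b | ∃ α : V ≃ Fin (Fintype.card V), layoutBandwidthLE G α b}

/-- `IsSkewedCantorComb b k V G x y` : the graph `G` on vertex type `V` is a skewed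
`b`-Cantor comb of depth `k` with end vertices `x` and `y`.

Depth `1`: a single edge.  Depth `k+1`: two disjoint depth-`k` combs (induced on the
vertex sets `S` and `S'`) with end vertices `x, y` and `x', y'`, joined by a path `P`
of length at least `2` from `y` to `x'`, internally disjoint from `S ∪ S'`; a stray
path `Q` is attached at an internal vertex `v` of `P`, meeting the rest only in `v`
and having at least `2(b-1)d` vertices besides `v`, where `d` bounds the distance
from `v` to every vertex of the backbone path `B` from `x` to `y'`; those pieces
cover all of `V`, and the comb is a tree (acyclic). -/
inductive IsSkewedCantorComb (b : ℕ) : ℕ → (V : Type) → SimpleGraph V → V → V → Prop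
  | base (V : Type) (G : SimpleGraph V) (x y : V)
      (hadj : G.Adj x y) (hall : ∀ z : V, z = x ∨ z = y) :
      IsSkewedCantorComb b 1 V G x y
  | step (k : ℕ) (V : Type) (G : SimpleGraph V)
      (S S' : Set V) (x y x' y' : V)
      (hxS : x ∈ S) (hyS : y ∈ S) (hx'S' : x' ∈ S') (hy'S' : y' ∈ S')
      (hdisj : Disjoint S S')
      (hS : IsSkewedCantorComb b k S (G.induce S) ⟨x, hxS⟩ ⟨y, hyS⟩)
      (hS' : IsSkewedCantorComb b k S' (G.induce S') ⟨x', hx'S'⟩ ⟨y', hy'S'⟩)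
      (P : G.Walk y x') (hP : P.IsPath) (hPlen : 2 ≤ P.length)
      (hPint : ∀ w ∈ P.support, w ∈ S ∪ S' → w = y ∨ w = x')
      (v : V) (hvP : v ∈ P.support) (hvy : v ≠ y) (hvx' : v ≠ x')
      (z : V) (Q : G.Walk v z) (hQ : Q.IsPath)
      (hQdisj : ∀ w ∈ Q.support, (w ∈ S ∪ S' ∨ w ∈ P.support) → w = v)
      (B : G.Walk x y') (hB : B.IsPath)
      (hBsupp : ∀ w ∈ B.support, w ∈ S ∪ S' ∨ w ∈ P.support)
      (d : ℕ) (hd : ∀ w ∈ B.support, G.dist v w ≤ d)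
      (hQlen : 2 * (b - 1) * d ≤ Q.length)
      (hcover : ∀ w : V, w ∈ S ∨ w ∈ S' ∨ w ∈ P.support ∨ w ∈ Q.support)
      (hacyclic : G.IsAcyclic) :
      IsSkewedCantorComb b (k + 1) V G x y'
open Set Function

theorem Set.InjOn.encard_le_of_mapsTo_Ioc {V : Type*} {A : Set V} {f : V → ℤ} (hf : InjOn f A)
    {c : ℤ} {n : ℕ} (h : MapsTo f A (Ioc c (c + n))) : A.encard ≤ n :=
  calc A.encard = (f '' A).encard := hf.encard_image.symm
    _ ≤ (Ioc c (c + n)).encard := encard_le_encard h.image_subset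
    _ = n := by rw [← Finset.coe_Ioc, encard_coe_eq_coe_finsetCard, Int.card_Ioc]; simp

namespace SimpleGraph

variable {V : Type*} {G : SimpleGraph V}

def lowerBoundary (G : SimpleGraph V) (f : V → ℤ) (t : ℤ) : Set V :=
  {u | f u ≤ t ∧ ∃ w, G.Adj u w ∧ t < f w}

def HasCrossingOutside (G : SimpleGraph V) (f : V → ℤ) (t : ℤ) (S : Set V) : Prop :=
  ∃ u w, G.Adj u w ∧ u ∉ S ∧ w ∉ S ∧ f u ≤ t ∧ t < f w

theorem encard_lowerBoundary_le {f : V → ℤ} (hf : Injective f) {β : ℕ}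
    (hband : ∀ u w, G.Adj u w → |f u - f w| ≤ β) (t : ℤ) :
    (G.lowerBoundary f t).encard ≤ β := by
  refine hf.injOn.encard_le_of_mapsTo_Ioc (c := t - β) fun u ⟨hut, w, huw, htw⟩ => ?_
  have := abs_le.mp (hband u w huw)
  constructor <;> linarith

theorem encard_lowerBoundary_induce_le (S : Set V) (f : V → ℤ) (t : ℤ) :
    ((G.induce S).lowerBoundary (f ∘ (↑)) t).encard ≤ (G.lowerBoundary f t ∩ S).encard := by
  rw [← Subtype.val_injective.encard_image]
  refine encard_le_encard ?_
  rintro _ ⟨u, ⟨hut, w, huw, htw⟩, rfl⟩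
  exact ⟨⟨hut, w, huw, htw⟩, u.2⟩

theorem HasCrossingOutside.le_encard_lowerBoundary {f : V → ℤ} {t : ℤ} {S : Set V} {k : ℕ}
    (h : G.HasCrossingOutside f t S) (hk : k ≤ (G.lowerBoundary f t ∩ S).encard) :
    ((k + 1 : ℕ) : ℕ∞) ≤ (G.lowerBoundary f t).encard := by
  obtain ⟨u, w, huw, huS, -, hut, htw⟩ := h
  have hu : u ∈ G.lowerBoundary f t := ⟨hut, w, huw, htw⟩
  calc ((k + 1 : ℕ) : ℕ∞) ≤ (insert u (G.lowerBoundary f t ∩ S)).encard := by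
        rw [encard_insert_of_notMem fun h => huS h.2]; push_cast; gcongr
    _ ≤ (G.lowerBoundary f t).encard := encard_le_encard (insert_subset hu inter_subset_left)

theorem Walk.abs_sub_le_mul_length {f : V → ℤ} {β : ℕ}
    (hband : ∀ u w, G.Adj u w → |f u - f w| ≤ β) {u w : V} (p : G.Walk u w) :
    |f u - f w| ≤ β * p.length := by
  induction p with
  | nil => simp
  | @cons u u' w huu' p ih =>
    calc |f u - f w| ≤ |f u - f u'| + |f u' - f w| := abs_sub_le _ _ _
      _ ≤ β + β * p.length := add_le_add (hband u u' huu') ih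
      _ = β * (p.cons huu').length := by push_cast [Walk.length_cons]; ring

theorem Reachable.abs_sub_le_mul_dist {f : V → ℤ} {β : ℕ}
    (hband : ∀ u w, G.Adj u w → |f u - f w| ≤ β) {u w : V} (h : G.Reachable u w) :
    |f u - f w| ≤ β * G.dist u w := by
  obtain ⟨p, hp⟩ := h.exists_walk_length_eq_dist
  exact hp ▸ p.abs_sub_le_mul_length hband

theorem Walk.le_iff_le_of_not_hasCrossingOutside {f : V → ℤ} {t : ℤ} {S : Set V}
    (hS : ¬G.HasCrossingOutside f t S) {a c : V} (p : G.Walk a c) (hp : ∀ w ∈ p.support, w ∉ S)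
    {u w : V} (hu : u ∈ p.support) (hw : w ∈ p.support) : f u ≤ t ↔ f w ≤ t := by
  suffices h : ∀ w ∈ p.support, f w ≤ t ↔ f a ≤ t from (h u hu).trans (h w hw).symm
  have hstep : ∀ u w, G.Adj u w → u ∉ S → w ∉ S → f u ≤ t → f w ≤ t := fun u w huw hu hw hut =>
    not_lt.mp fun htw => hS ⟨u, w, huw, hu, hw, hut, htw⟩
  clear hu hw
  induction p with
  | nil => simp
  | @cons a b c hab p ih =>
    simp only [Walk.support_cons, List.mem_cons, forall_eq_or_imp, true_and] at hp ⊢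
    have hb := hp.2 b p.start_mem_support
    exact fun w hw => (ih hp.2 w hw).trans ⟨hstep b a hab.symm hb hp.1, hstep a b hab hp.1 hb⟩

theorem Walk.IsPath.append {u v w : V} {p : G.Walk u v} {q : G.Walk v w} (hp : p.IsPath)
    (hq : q.IsPath) (h : ∀ x ∈ p.support, x ∈ q.support → x = v) : (p.append q).IsPath := by
  have hq' := hq.support_nodup
  rw [← Walk.cons_tail_support q, List.nodup_cons] at hq'
  rw [Walk.isPath_def, Walk.support_append]
  refine hp.support_nodup.append hq'.2 fun x hxp hxq => ?_
  obtain rfl := h x hxp (List.mem_of_mem_tail hxq)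
  exact hq'.1 hxq

theorem Walk.IsPath.append_append {S S' : Set V} (hdisj : Disjoint S S') {x y x' y' : V}
    {W : G.Walk x y} {P : G.Walk y x'} {W' : G.Walk x' y'} (hW : W.IsPath)
    (hWS : ∀ w ∈ W.support, w ∈ S) (hP : P.IsPath) (hPS : ∀ w ∈ P.support, w ∈ S → w = y)
    (hPS' : ∀ w ∈ P.support, w ∈ S' → w = x') (hW' : W'.IsPath)
    (hW'S' : ∀ w ∈ W'.support, w ∈ S') : (W.append (P.append W')).IsPath := by
  refine hW.append (hP.append hW' fun w hwP hwW' => hPS' w hwP (hW'S' w hwW')) fun w hwW hw => ?_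
  rcases (Walk.mem_support_append_iff _ _).mp hw with hwP | hwW'
  · exact hPS w hwP (hWS w hwW)
  · exact (Set.disjoint_left.mp hdisj (hWS w hwW) (hW'S' w hwW')).elim

theorem Walk.IsPath.notMem_of_mem_support_takeUntil [DecidableEq V] {X : Set V} {u v w : V}
    {P : G.Walk u v} (hP : P.IsPath) (hPX : ∀ z ∈ P.support, z ∈ X → z = v)
    (hw : w ∈ P.support) (hwv : w ≠ v) : ∀ z ∈ (P.takeUntil w hw).support, z ∉ X :=
  fun z hz hzX => by
    obtain rfl := hPX z (P.support_takeUntil_subset_support hw hz) hzX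
    exact Walk.endpoint_notMem_support_takeUntil hP hw hwv.symm hz

theorem Walk.exists_mem_support_lt_abs_sub {f : V → ℤ} (hf : Injective f) {v z : V}
    (Q : G.Walk v z) (hQ : Q.IsPath) {D : ℕ} (hQD : 2 * D ≤ Q.length) {a : V}
    (haQ : a ∉ Q.support) (ha : |f a - f v| ≤ D) : ∃ q ∈ Q.support, D < |f q - f v| := by
  classical
  by_contra! h
  have hcard : ((insert a Q.support.toFinset : Finset V) : Set V).encard ≤ (2 * D + 1 : ℕ) := by
    refine hf.injOn.encard_le_of_mapsTo_Ioc (c := f v - D - 1) fun u hu => ?_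
    have hu : |f u - f v| ≤ D := by
      simp only [Finset.coe_insert, List.coe_toFinset, mem_insert_iff, mem_ofPred_eq] at hu
      rcases hu with rfl | hu
      exacts [ha, h u hu]
    have := abs_le.mp hu
    constructor <;> push_cast <;> linarith
  rw [encard_coe_eq_coe_finsetCard, Finset.card_insert_of_notMem (by simpa using haQ),
    List.toFinset_card_of_nodup hQ.support_nodup, Walk.length_support] at hcard
  norm_cast at hcard
  omega

theorem Walk.exists_mem_support_forall_lt_or_forall_gt {f : V → ℤ} (hf : Injective f) {β : ℕ}
    (hband : ∀ u w, G.Adj u w → |f u - f w| ≤ β) {x y v z : V} (B : G.Walk x y)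
    (hvB : v ∈ B.support) {d : ℕ} (hd : ∀ w ∈ B.support, G.dist v w ≤ d) (Q : G.Walk v z)
    (hQ : Q.IsPath) (hQd : 2 * (β * d) ≤ Q.length) (hxQ : x ∉ Q.support) :
    ∃ q ∈ Q.support, (∀ w ∈ B.support, f w < f q) ∨ (∀ w ∈ B.support, f q < f w) := by
  classical
  have hwindow : ∀ w ∈ B.support, |f w - f v| ≤ (β * d : ℕ) := fun w hw => by
    rw [abs_sub_comm]
    calc |f v - f w| ≤ β * G.dist v w := Reachable.abs_sub_le_mul_dist hband
          ((B.takeUntil v hvB).reachable.symm.trans (B.takeUntil w hw).reachable)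
      _ ≤ (β * d : ℕ) := by push_cast; gcongr; exact_mod_cast hd w hw
  obtain ⟨q, hqQ, hq⟩ := Q.exists_mem_support_lt_abs_sub hf hQ hQd hxQ
    (hwindow x B.start_mem_support)
  refine ⟨q, hqQ, (lt_abs.mp hq).imp (fun hq w hw => ?_) (fun hq w hw => ?_)⟩ <;>
  · have := abs_le.mp (hwindow w hw)
    linarith

theorem hasCrossingOutside_or {f : V → ℤ} {S S' : Set V} {t₁ t₂ : ℤ}
    {a c a' c' q l₁ h₁ l₂ h₂ : V} (T₁ : G.Walk a c) (hT₁ : ∀ w ∈ T₁.support, w ∉ S)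
    (hqT₁ : q ∈ T₁.support) (hl₂T₁ : l₂ ∈ T₁.support) (hh₂T₁ : h₂ ∈ T₁.support)
    (T₂ : G.Walk a' c') (hT₂ : ∀ w ∈ T₂.support, w ∉ S')
    (hqT₂ : q ∈ T₂.support) (hl₁T₂ : l₁ ∈ T₂.support) (hh₁T₂ : h₁ ∈ T₂.support)
    (hl₁ : f l₁ ≤ t₁) (hh₁ : t₁ < f h₁) (hl₂ : f l₂ ≤ t₂) (hh₂ : t₂ < f h₂)
    (hq : (f h₁ < f q ∧ f h₂ < f q) ∨ (f q < f l₁ ∧ f q < f l₂)) :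
    G.HasCrossingOutside f t₁ S ∨ G.HasCrossingOutside f t₂ S' := by
  by_contra! ⟨h₁S, h₂S'⟩
  have := T₁.le_iff_le_of_not_hasCrossingOutside h₁S hT₁ hqT₁ hl₂T₁
  have := T₁.le_iff_le_of_not_hasCrossingOutside h₁S hT₁ hqT₁ hh₂T₁
  have := T₂.le_iff_le_of_not_hasCrossingOutside h₂S' hT₂ hqT₂ hl₁T₂
  have := T₂.le_iff_le_of_not_hasCrossingOutside h₂S' hT₂ hqT₂ hh₁T₂
  omega

theorem exists_isPath_of_induce {S : Set V} {a c : S} {f : V → ℤ} {k : ℕ}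
    (hcut : ∃ W : (G.induce S).Walk a c, W.IsPath ∧ ∃ t : ℤ, (∃ l ∈ W.support, f l ≤ t) ∧
      (∃ h ∈ W.support, t < f h) ∧ k ≤ ((G.induce S).lowerBoundary (f ∘ (↑)) t).encard) :
    ∃ W : G.Walk a c, W.IsPath ∧ (∀ w ∈ W.support, w ∈ S) ∧ ∃ t : ℤ,
      (∃ l ∈ W.support, f l ≤ t) ∧ (∃ h ∈ W.support, t < f h) ∧
      k ≤ (G.lowerBoundary f t ∩ S).encard := by
  obtain ⟨W, hW, t, ⟨l, hl, hlt⟩, ⟨h, hh, hht⟩, hk⟩ := hcut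
  have hmem : ∀ u ∈ W.support, (u : V) ∈ (W.map (Embedding.induce S).toHom).support :=
    fun u hu => Walk.support_map _ W ▸ List.mem_map_of_mem hu
  refine ⟨W.map (Embedding.induce S).toHom, hW.map Subtype.val_injective, fun w hw => ?_,
    t, ⟨l, hmem l hl, hlt⟩, ⟨h, hmem h hh, hht⟩, hk.trans (encard_lowerBoundary_induce_le S f t)⟩
  obtain ⟨u, -, rfl⟩ := List.mem_map.mp (Walk.support_map _ W ▸ hw)
  exact u.2

end SimpleGraph

open SimpleGraph

theorem IsSkewedCantorComb.exists_le_encard_lowerBoundary {b k : ℕ} {V : Type}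
    {G : SimpleGraph V} {x y : V} (hcomb : IsSkewedCantorComb b k V G x y) {f : V → ℤ}
    (hf : Injective f) {β : ℕ} (hβ : β < b) (hband : ∀ u w, G.Adj u w → |f u - f w| ≤ β) :
    ∃ W : G.Walk x y, W.IsPath ∧ ∃ t : ℤ, (∃ l ∈ W.support, f l ≤ t) ∧
      (∃ h ∈ W.support, t < f h) ∧ k ≤ (G.lowerBoundary f t).encard := by
  induction hcomb with
  | base V G x y hxy _ =>
    rcases (hf.ne hxy.ne).lt_or_gt with hlt | hlt
    · exact ⟨hxy.toWalk, .of_adj hxy, f x, ⟨x, by simp, le_rfl⟩, ⟨y, by simp, hlt⟩,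
        one_le_encard_iff_nonempty.mpr ⟨x, le_rfl, y, hxy, hlt⟩⟩
    · exact ⟨hxy.toWalk, .of_adj hxy, f y, ⟨y, by simp, le_rfl⟩, ⟨x, by simp, hlt⟩,
        one_le_encard_iff_nonempty.mpr ⟨y, le_rfl, x, hxy.symm, hlt⟩⟩
  | step k V G S S' x y x' y' hxS hyS hx'S' hy'S' hdisj _ _ P hP _ hPint v hvP hvy hvx' z Q hQ
      hQdisj B hB _ d hd hQlen _ hacyclic ihS ihS' =>
    classical
    obtain ⟨W₁, hW₁, hW₁S, t₁, ⟨l₁, hl₁, hl₁t⟩, ⟨h₁, hh₁, hh₁t⟩, hk₁⟩ :=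
      exists_isPath_of_induce (ihS (hf.comp Subtype.val_injective) fun u w => hband u w)
    obtain ⟨W₂, hW₂, hW₂S', t₂, ⟨l₂, hl₂, hl₂t⟩, ⟨h₂, hh₂, hh₂t⟩, hk₂⟩ :=
      exists_isPath_of_induce (ihS' (hf.comp Subtype.val_injective) fun u w => hband u w)
    have hPS : ∀ w ∈ P.support, w ∈ S → w = y := fun w hw hwS =>
      (hPint w hw (.inl hwS)).resolve_right fun h => Set.disjoint_left.mp hdisj hwS (h ▸ hx'S')
    have hPS' : ∀ w ∈ P.support, w ∈ S' → w = x' := fun w hw hwS' =>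
      (hPint w hw (.inr hwS')).resolve_left fun h => Set.disjoint_left.mp hdisj (h ▸ hyS) hwS'
    have hQS : ∀ w ∈ Q.support, w ∉ S := fun w hw hwS =>
      hvy (hPS v hvP (hQdisj w hw (.inl (.inl hwS)) ▸ hwS))
    have hQS' : ∀ w ∈ Q.support, w ∉ S' := fun w hw hwS' =>
      hvx' (hPS' v hvP (hQdisj w hw (.inl (.inr hwS')) ▸ hwS'))
    have hWB : W₁.append (P.append W₂) = B := congrArg Subtype.val
      ((hacyclic.subsingleton_path x y').elim
        ⟨_, hW₁.append_append hdisj hW₁S hP hPS hPS' hW₂ hW₂S'⟩ ⟨B, hB⟩)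
    have hW₁B : ∀ w ∈ W₁.support, w ∈ B.support := fun w hw => by simp [← hWB, hw]
    have hW₂B : ∀ w ∈ W₂.support, w ∈ B.support := fun w hw => by simp [← hWB, hw]
    obtain ⟨q, hqQ, hq⟩ := B.exists_mem_support_forall_lt_or_forall_gt hf hband
      (by simp [← hWB, hvP]) hd Q hQ (le_trans (by rw [← mul_assoc]; gcongr; omega) hQlen)
      (fun hxQ => hQS x hxQ hxS)
    have hvP' : v ∈ P.reverse.support := by simpa using hvP
    let T₁ := (W₂.reverse.append (P.reverse.takeUntil v hvP')).append Q
    let T₂ := (W₁.append (P.takeUntil v hvP)).append Q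
    have hT₁ : ∀ w ∈ T₁.support, w ∉ S := by
      simp only [T₁, Walk.mem_support_append_iff, Walk.support_reverse, List.mem_reverse]
      rintro w ((hw | hw) | hw)
      exacts [Set.disjoint_right.mp hdisj (hW₂S' w hw),
        hP.reverse.notMem_of_mem_support_takeUntil (by simpa using hPS) hvP' hvy w hw, hQS w hw]
    have hT₂ : ∀ w ∈ T₂.support, w ∉ S' := by
      simp only [T₂, Walk.mem_support_append_iff]
      rintro w ((hw | hw) | hw)
      exacts [Set.disjoint_left.mp hdisj (hW₁S w hw),
        hP.notMem_of_mem_support_takeUntil hPS' hvP hvx' w hw, hQS' w hw]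
    have hqB : (f h₁ < f q ∧ f h₂ < f q) ∨ (f q < f l₁ ∧ f q < f l₂) :=
      hq.imp (fun hq => ⟨hq h₁ (hW₁B h₁ hh₁), hq h₂ (hW₂B h₂ hh₂)⟩)
        (fun hq => ⟨hq l₁ (hW₁B l₁ hl₁), hq l₂ (hW₂B l₂ hl₂)⟩)
    rcases hasCrossingOutside_or T₁ hT₁ (by simp [T₁, hqQ]) (by simp [T₁, hl₂]) (by simp [T₁, hh₂])
        T₂ hT₂ (by simp [T₂, hqQ]) (by simp [T₂, hl₁]) (by simp [T₂, hh₁]) hl₁t hh₁t hl₂t hh₂t hqB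
      with hcross | hcross
    · exact ⟨B, hB, t₁, ⟨l₁, hW₁B l₁ hl₁, hl₁t⟩, ⟨h₁, hW₁B h₁ hh₁, hh₁t⟩,
        hcross.le_encard_lowerBoundary hk₁⟩
    · exact ⟨B, hB, t₂, ⟨l₂, hW₂B l₂ hl₂, hl₂t⟩, ⟨h₂, hW₂B h₂ hh₂, hh₂t⟩,
        hcross.le_encard_lowerBoundary hk₂⟩

theorem layoutBandwidthLE_card {V : Type} [Fintype V] (G : SimpleGraph V)
    (α : V ≃ Fin (Fintype.card V)) : layoutBandwidthLE G α (Fintype.card V) := fun u w _ => by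
  have := (α u).isLt
  have := (α w).isLt
  rw [abs_le]
  omega

theorem skewedCantorComb_bandwidth_ge_general {b k : ℕ} (hkb : k ≤ b)
    {V : Type} [Fintype V] (G : SimpleGraph V) (x y : V)
    (h : IsSkewedCantorComb b k V G x y) :
    k ≤ graphBandwidth G := by
  refine le_csInf ⟨_, Fintype.equivFin V, layoutBandwidthLE_card G _⟩ ?_
  rintro m ⟨α, hα⟩
  rcases le_or_gt b m with hbm | hmb
  · exact hkb.trans hbm
  have hf : Injective fun u => (α u : ℤ) :=
    fun u w huw => α.injective (Fin.ext (Int.ofNat_inj.mp huw))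
  obtain ⟨-, -, t, -, -, hk⟩ := h.exists_le_encard_lowerBoundary hf hmb hα
  exact_mod_cast hk.trans (G.encard_lowerBoundary_le hf hα t)

/-- Every skewed `b`-Cantor comb of depth `k` (with `1 ≤ k ≤ b`) has bandwidth at
least `k`. -/
theorem skewedCantorComb_bandwidth_ge {b k : ℕ} (hk : 1 ≤ k) (hkb : k ≤ b)
    {V : Type} [Fintype V] (G : SimpleGraph V) (x y : V)
    (h : IsSkewedCantorComb b k V G x y) :
    k ≤ graphBandwidth G :=
  skewedCantorComb_bandwidth_ge_general hkb G x y h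
end

section
/- Let T be a tree with a p-recursive path decomposition P, T¹, ..., Tᵗ, and let T_S be the corresponding simplified instance (replace each subtree Tⁱ by a path Pⁱ on |V(Tⁱ)| vertices attached at one endpoint to the neighbor of Tⁱ on P). Then bw(T_S) ≤ 2·bw(T). -/
/-- `X 0, ..., X (m-1)` is a path decomposition of `G`. -/
structure IsPathDecomp {V : Type} (G : SimpleGraph V) (m : ℕ) (X : Fin m → Finset V) :
    Prop where
  cover : ∀ v : V, ∃ i, v ∈ X i
  edges : ∀ u v : V, G.Adj u v → ∃ i, u ∈ X i ∧ v ∈ X i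
  interval : ∀ v : V, ∀ i j k : Fin m, i ≤ j → j ≤ k → v ∈ X i → v ∈ X k → v ∈ X j

/-- The pathwidth of a finite graph. -/
noncomputable def pathwidth {V : Type} [Fintype V] (G : SimpleGraph V) : ℕ :=
  sInf {w | ∃ m, ∃ X : Fin m → Finset V, IsPathDecomp G m X ∧ ∀ i, (X i).card ≤ w + 1}

/-- Zigzag enumeration of `{0,...,n-1}` starting at `k` with steps of size at most 2. -/
def zig (k j : ℕ) : ℕ :=
  if 2 * j ≤ k then k - 2 * j else if j ≤ k then 2 * j - (k + 1) else j

lemma zig_zero (k : ℕ) : zig k 0 = k := by simp [zig]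

lemma zig_lt {n k : ℕ} (hk : k < n) {j : ℕ} (hj : j < n) : zig k j < n := by
  unfold zig; split_ifs <;> omega

lemma zig_inj {k j j' : ℕ} (h : zig k j = zig k j') : j = j' := by
  unfold zig at h; split_ifs at h <;> omega

lemma zig_step (k j : ℕ) : zig k (j + 1) ≤ zig k j + 2 ∧ zig k j ≤ zig k (j + 1) + 2 := by
  unfold zig; split_ifs <;> omega

lemma walk_crossing {W : Type*} {G : SimpleGraph W} {S : Set W} :
    ∀ {x y : W}, G.Walk x y → x ∈ S → y ∉ S →
      ∃ u v, u ∈ S ∧ v ∉ S ∧ G.Adj u v := by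
  intro x y w
  induction w with
  | nil => intro h h'; exact absurd h h'
  | @cons x z y h q ih =>
    intro hx hy
    by_cases hz : z ∈ S
    · exact ih hz hy
    · exact ⟨x, z, hx, hz, h⟩

theorem simplified_instance_bandwidth_le' {V : Type} [Fintype V] [DecidableEq V]
    (T T_S : SimpleGraph V) (p t : ℕ)
    (x y : V) (P : T.Walk x y)
    (C : Fin t → Finset V)
    (hCP : ∀ i, ∀ v ∈ C i, v ∉ P.support)
    (hCdisj : ∀ i j, i ≠ j → Disjoint (C i) (C j))
    (hCconn : ∀ i, (T.induce (↑(C i) : Set V)).Connected)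
    (n : Fin t → ℕ) (hn : ∀ i, (C i).card = n i) (hnpos : ∀ i, 0 < n i)
    (g : Fin t → ℕ → V)
    (hg : ∀ i, ∀ j, j < n i → g i j ∈ C i)
    (hginj : ∀ i, ∀ j j', j < n i → j' < n i → g i j = g i j' → j = j')
    (a : Fin t → V) (haP : ∀ i, a i ∈ P.support)
    (haadj : ∀ i, ∃ v ∈ C i, T.Adj v (a i))
    (hTS : ∀ u w : V, T_S.Adj u w ↔
      ((u ∈ P.support ∧ w ∈ P.support ∧ T.Adj u w) ∨
       (∃ i, ∃ j, j + 1 < n i ∧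
          ((u = g i j ∧ w = g i (j + 1)) ∨ (w = g i j ∧ u = g i (j + 1)))) ∨
       (∃ i, (u = a i ∧ w = g i 0) ∨ (w = a i ∧ u = g i 0)))) :
    graphBandwidth T_S ≤ 2 * graphBandwidth T := by
  classical
  -- there is an optimal layout of T
  have hne : {b | ∃ α : V ≃ Fin (Fintype.card V), layoutBandwidthLE T α b}.Nonempty := by
    refine ⟨Fintype.card V, Fintype.equivFin V, ?_⟩
    intro u v _
    have h1 := (Fintype.equivFin V u).isLt
    have h2 := (Fintype.equivFin V v).isLt
    rw [abs_le]
    omega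
  obtain ⟨α, hα⟩ : ∃ α : V ≃ Fin (Fintype.card V),
      layoutBandwidthLE T α (graphBandwidth T) := Nat.sInf_mem hne
  set b := graphBandwidth T with hbdef
  -- positions occupied by each component
  set D : Fin t → Finset (Fin (Fintype.card V)) :=
    fun i => (C i).image (fun v => α v) with hDdef
  have hDcard : ∀ i, (D i).card = n i := by
    intro i
    rw [hDdef]
    rw [Finset.card_image_of_injective _ α.injective, hn]
  have hDmem : ∀ i, ∀ v ∈ C i, α v ∈ D i := by
    intro i v hv
    rw [hDdef]
    exact Finset.mem_image_of_mem _ hv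
  have hDmem' : ∀ i (z : Fin (Fintype.card V)), z ∈ D i → ∃ v ∈ C i, α v = z := by
    intro i z hz
    rw [hDdef] at hz
    exact Finset.mem_image.mp hz
  -- sorted enumeration of the positions of C i
  set pp : ∀ i : Fin t, Fin (n i) → Fin (Fintype.card V) :=
    fun i j => ((D i).orderIsoOfFin (hDcard i) j : Fin (Fintype.card V)) with hppdef
  have ppmem : ∀ i j, pp i j ∈ D i := fun i j => ((D i).orderIsoOfFin (hDcard i) j).2
  have ppmono : ∀ i (r s : Fin (n i)), r ≤ s → pp i r ≤ pp i s := by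
    intro i r s hrs
    exact_mod_cast ((D i).orderIsoOfFin (hDcard i)).monotone hrs
  have ppinj : ∀ i, Function.Injective (pp i) := by
    intro i a1 a2 h
    exact ((D i).orderIsoOfFin (hDcard i)).injective (Subtype.ext h)
  -- one-step gap bound from connectivity
  have gap1 : ∀ i (r : ℕ) (h : r + 1 < n i),
      ((pp i ⟨r + 1, h⟩ : ℕ) : ℤ) ≤ ((pp i ⟨r, by omega⟩ : ℕ) : ℤ) + b := by
    intro i r h
    set xx := pp i ⟨r, by omega⟩ with hxx
    set yy := pp i ⟨r + 1, h⟩ with hyy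
    obtain ⟨vx, hvxC, hvx⟩ := hDmem' i xx (ppmem i _)
    obtain ⟨vy, hvyC, hvy⟩ := hDmem' i yy (ppmem i _)
    have hxy : xx < yy := by
      have hlt : (⟨r, by omega⟩ : Fin (n i)) < ⟨r + 1, h⟩ := by
        simp [Fin.lt_def]
      exact_mod_cast ((D i).orderIsoOfFin (hDcard i)).strictMono hlt
    -- crossing edge
    obtain ⟨wlk⟩ := (hCconn i).preconnected
      ⟨vx, Finset.mem_coe.mpr hvxC⟩ ⟨vy, Finset.mem_coe.mpr hvyC⟩
    obtain ⟨u', w', hu', hw', hadj⟩ :=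
      walk_crossing (S := {z : ↥(↑(C i) : Set V) | α z.1 ≤ xx}) wlk
        (by simp only [Set.mem_setOf_eq]; rw [hvx])
        (by simp only [Set.mem_setOf_eq]; rw [hvy]; exact not_le.mpr hxy)
    have hTadj : T.Adj u'.1 w'.1 := hadj
    have hband := hα _ _ hTadj
    have hu'le : (α u'.1 : ℕ) ≤ (xx : ℕ) := hu'
    have hw'ge : (yy : ℕ) ≤ (α w'.1 : ℕ) := by
      have hmem : α w'.1 ∈ D i := hDmem i _ (Finset.mem_coe.mp w'.2)
      obtain ⟨s, hs⟩ := ((D i).orderIsoOfFin (hDcard i)).surjective ⟨α w'.1, hmem⟩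
      have hsv : pp i s = α w'.1 := congrArg Subtype.val hs
      rcases le_or_gt (s : ℕ) r with h' | h'
      · exfalso
        apply hw'
        have : pp i s ≤ xx := ppmono i s ⟨r, by omega⟩ (by exact h')
        rw [hsv] at this
        exact this
      · have : yy ≤ pp i s := ppmono i ⟨r + 1, h⟩ s (by exact h')
        rw [hsv] at this
        exact this
    rw [abs_le] at hband
    omega
  -- two-step gap bound
  have gap2 : ∀ i (r s : ℕ) (hr : r < n i) (hs : s < n i), r ≤ s → s ≤ r + 2 →
      ((pp i ⟨s, hs⟩ : ℕ) : ℤ) ≤ ((pp i ⟨r, hr⟩ : ℕ) : ℤ) + 2 * b := by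
    intro i r s hr hs h1 h2
    have hb0 : (0 : ℤ) ≤ (b : ℤ) := Int.natCast_nonneg b
    rcases (by omega : s = r ∨ s = r + 1 ∨ s = r + 2) with rfl | rfl | rfl
    · omega
    · have := gap1 i r hs
      omega
    · have e1 := gap1 i r (by omega : r + 1 < n i)
      have e2 := gap1 i (r + 1) hs
      have hEq : (⟨r + 1 + 1, hs⟩ : Fin (n i)) = ⟨r + 2, hs⟩ := rfl
      rw [hEq] at e2
      omega
  have ppdist : ∀ i (r s : Fin (n i)), (r : ℕ) ≤ (s : ℕ) + 2 → (s : ℕ) ≤ (r : ℕ) + 2 →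
      |((pp i s : ℕ) : ℤ) - ((pp i r : ℕ) : ℤ)| ≤ 2 * b := by
    intro i r s h1 h2
    rcases le_total (r : ℕ) (s : ℕ) with h | h
    · have hmono := ppmono i r s (by exact h)
      have hg2 := gap2 i r s r.isLt s.isLt h h2
      simp only [Fin.eta] at hg2
      rw [abs_le]
      omega
    · have hmono := ppmono i s r (by exact h)
      have hg2 := gap2 i s r s.isLt r.isLt h h1
      simp only [Fin.eta] at hg2
      rw [abs_le]
      omega
  -- attachment neighbors
  choose v0 hv0C hv0adj using haadj
  set kF : ∀ i : Fin t, Fin (n i) :=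
    fun i => ((D i).orderIsoOfFin (hDcard i)).symm ⟨α (v0 i), hDmem i _ (hv0C i)⟩ with hkFdef
  have hppk : ∀ i, pp i (kF i) = α (v0 i) := by
    intro i
    rw [hkFdef]
    exact congrArg Subtype.val (((D i).orderIsoOfFin (hDcard i)).apply_symm_apply _)
  -- zigzag permutation of ranks
  set σf : ∀ i : Fin t, Fin (n i) → Fin (n i) :=
    fun i j => ⟨zig (kF i) j, zig_lt (kF i).isLt j.isLt⟩ with hσdef
  have hσinj : ∀ i, Function.Injective (σf i) := by
    intro i a1 a2 h
    exact Fin.ext (zig_inj (congrArg Fin.val h))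
  -- every element of C i is enumerated by g i
  have hsurj : ∀ i, ∀ v ∈ C i, ∃ j : Fin (n i), g i (j : ℕ) = v := by
    intro i v hv
    have hcard : Fintype.card {w // w ∈ C i} = n i := by
      simp [Fintype.card_coe, hn]
    have hbij : Function.Bijective (fun j : Fin (n i) => (⟨g i (j : ℕ), hg i j j.isLt⟩ : {w // w ∈ C i})) := by
      rw [Fintype.bijective_iff_injective_and_card]
      constructor
      · intro a1 a2 h
        exact Fin.ext (hginj i _ _ a1.isLt a2.isLt (congrArg Subtype.val h))
      · simp [hcard]
    obtain ⟨j, hj⟩ := hbij.2 ⟨v, hv⟩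
    exact ⟨j, congrArg Subtype.val hj⟩
  have huniq : ∀ (v : V) (i i' : Fin t), v ∈ C i → v ∈ C i' → i = i' := by
    intro v i i' h h'
    by_contra hcon
    exact Finset.disjoint_left.mp (hCdisj i i' hcon) h h'
  -- the new layout as a function
  have hF : ∃ F : V → Fin (Fintype.card V),
      (∀ v, (∀ i, v ∉ C i) → F v = α v) ∧
      (∀ i (j : Fin (n i)), F (g i (j : ℕ)) = pp i (σf i j)) := by
    have hbij : ∀ i : Fin t, Function.Bijective
        (fun j : Fin (n i) => (⟨g i (j : ℕ), hg i j j.isLt⟩ : {w // w ∈ C i})) := by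
      intro i
      rw [Fintype.bijective_iff_injective_and_card]
      constructor
      · intro a1 a2 h
        exact Fin.ext (hginj i _ _ a1.isLt a2.isLt (congrArg Subtype.val h))
      · simp [Fintype.card_coe, hn]
    set ee : ∀ i : Fin t, Fin (n i) ≃ {w // w ∈ C i} :=
      fun i => Equiv.ofBijective _ (hbij i) with heedef
    refine ⟨fun v => if hv : ∃ i, v ∈ C i then
        pp hv.choose (σf hv.choose ((ee hv.choose).symm ⟨v, hv.choose_spec⟩)) else α v,
      ?_, ?_⟩
    · intro v hv
      exact dif_neg (not_exists.mpr hv)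
    · intro i j
      have hex : ∃ i', g i (j : ℕ) ∈ C i' := ⟨i, hg i j j.isLt⟩
      have key : ∀ (i' : Fin t) (h' : g i (j : ℕ) ∈ C i'), i' = i →
          pp i' (σf i' ((ee i').symm ⟨g i (j : ℕ), h'⟩)) = pp i (σf i j) := by
        rintro i' h' rfl
        rw [show (⟨g i' (j : ℕ), h'⟩ : {w // w ∈ C i'}) = ee i' j from rfl,
          Equiv.symm_apply_apply]
      simp only [dif_pos hex]
      exact key hex.choose hex.choose_spec (huniq _ _ _ hex.choose_spec (hg i j j.isLt))
  obtain ⟨F, hFP, hFg⟩ := hF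
  have hFmem : ∀ i, ∀ v ∈ C i, F v ∈ D i := by
    intro i v hv
    obtain ⟨j, rfl⟩ := hsurj i v hv
    rw [hFg]
    exact ppmem i _
  -- injectivity of F
  have hFinj : Function.Injective F := by
    intro u v h
    by_cases hu : ∃ i, u ∈ C i
    · obtain ⟨i, hui⟩ := hu
      by_cases hv : ∃ i', v ∈ C i'
      · obtain ⟨i', hvi⟩ := hv
        have hi : i = i' := by
          by_contra hcon
          have h1 : F u ∈ D i := hFmem i u hui
          have h2 : F v ∈ D i' := hFmem i' v hvi
          rw [h] at h1
          obtain ⟨w1, hw1, hw1'⟩ := hDmem' i _ h1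
          obtain ⟨w2, hw2, hw2'⟩ := hDmem' i' _ h2
          have hww : w1 = w2 := α.injective (hw1'.trans hw2'.symm)
          exact Finset.disjoint_left.mp (hCdisj i i' hcon) hw1 (hww ▸ hw2)
        subst hi
        obtain ⟨j1, rfl⟩ := hsurj i u hui
        obtain ⟨j2, rfl⟩ := hsurj i v hvi
        rw [hFg, hFg] at h
        have := hσinj i (ppinj i h)
        rw [this]
      · exfalso
        have h1 : F u ∈ D i := hFmem i u hui
        rw [h, hFP v (not_exists.mp hv)] at h1
        obtain ⟨w1, hw1, hw1'⟩ := hDmem' i _ h1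
        exact hv ⟨i, (α.injective hw1') ▸ hw1⟩
    · by_cases hv : ∃ i', v ∈ C i'
      · exfalso
        obtain ⟨i', hvi⟩ := hv
        have h2 : F v ∈ D i' := hFmem i' v hvi
        rw [← h, hFP u (not_exists.mp hu)] at h2
        obtain ⟨w2, hw2, hw2'⟩ := hDmem' i' _ h2
        exact hu ⟨i', (α.injective hw2') ▸ hw2⟩
      · rw [hFP u (not_exists.mp hu), hFP v (not_exists.mp hv)] at h
        exact α.injective h
  have hFbij : Function.Bijective F := by
    rw [Fintype.bijective_iff_injective_and_card]
    exact ⟨hFinj, by simp⟩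
  set β : V ≃ Fin (Fintype.card V) := Equiv.ofBijective F hFbij with hβdef
  have hβF : ∀ z : V, β z = F z := fun z => rfl
  -- conclude via the new layout
  apply Nat.sInf_le
  refine ⟨β, ?_⟩
  intro u w hadj
  have hb0 : (0 : ℤ) ≤ (b : ℤ) := Int.natCast_nonneg b
  rw [hTS] at hadj
  rcases hadj with ⟨huP, hwP, hTadj⟩ | ⟨i, j, hj, hc⟩ | ⟨i, hc⟩
  · rw [hβF u, hβF w, hFP u (fun i hi => hCP i u hi huP), hFP w (fun i hi => hCP i w hi hwP)]
    have := hα u w hTadj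
    rw [abs_le] at this ⊢
    omega
  · have hj0 : j < n i := by omega
    have hd := ppdist i (σf i ⟨j, hj0⟩) (σf i ⟨j + 1, hj⟩) ?_ ?_
    · rcases hc with ⟨rfl, rfl⟩ | ⟨rfl, rfl⟩
      · rw [hβF, hβF, hFg i ⟨j, hj0⟩, hFg i ⟨j + 1, hj⟩]
        rw [abs_sub_comm]
        rw [abs_le] at hd ⊢
        omega
      · rw [hβF, hβF, hFg i ⟨j, hj0⟩, hFg i ⟨j + 1, hj⟩]
        rw [abs_le] at hd ⊢
        omega
    · exact (zig_step (kF i) j).2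
    · exact (zig_step (kF i) j).1
  · have h0 : (0 : ℕ) < n i := hnpos i
    have hg0 : F (g i 0) = α (v0 i) := by
      have := hFg i ⟨0, h0⟩
      have hσ0 : σf i ⟨0, h0⟩ = kF i := Fin.ext (zig_zero (kF i))
      rw [hσ0, hppk] at this
      exact this
    have haC : ∀ i', a i ∉ C i' := fun i' hi' => hCP i' _ hi' (haP i)
    have hband := hα (v0 i) (a i) (hv0adj i)
    rcases hc with ⟨rfl, rfl⟩ | ⟨rfl, rfl⟩
    · rw [hβF, hβF, hFP _ haC, hg0]
      rw [abs_le] at hband ⊢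
      omega
    · rw [hβF, hβF, hFP _ haC, hg0]
      rw [abs_le] at hband ⊢
      omega

/-- The simplified instance `T_S` of a tree `T` with respect to a `p`-recursive path
decomposition `P, C 1, ..., C t` (each `C i` replaced by a path on `n i = |C i|`
vertices, enumerated by `g i`, attached to the `P`-endpoint `a i` of the unique edge
joining `C i` to `P`) has bandwidth at most twice that of `T`. -/
theorem simplified_instance_bandwidth_le {V : Type} [Fintype V] [DecidableEq V]
    (T T_S : SimpleGraph V) (hT : T.IsTree) (p t : ℕ)
    (x y : V) (P : T.Walk x y) (hP : P.IsPath)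
    (C : Fin t → Finset V)
    (hcover : ∀ v : V, v ∈ P.support ∨ ∃ i, v ∈ C i)
    (hCP : ∀ i, ∀ v ∈ C i, v ∉ P.support)
    (hCdisj : ∀ i j, i ≠ j → Disjoint (C i) (C j))
    (hCconn : ∀ i, (T.induce (↑(C i) : Set V)).Connected)
    (hCcomp : ∀ i, ∀ v ∈ C i, ∀ w : V, T.Adj v w → w ∈ C i ∨ w ∈ P.support)
    (hone : ∀ i, ∃! e : V × V, e.1 ∈ C i ∧ e.2 ∈ P.support ∧ T.Adj e.1 e.2)
    (hpw : ∀ i, pathwidth (T.induce (↑(C i) : Set V)) < p)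
    (n : Fin t → ℕ) (hn : ∀ i, (C i).card = n i) (hnpos : ∀ i, 0 < n i)
    (g : Fin t → ℕ → V)
    (hg : ∀ i, ∀ j, j < n i → g i j ∈ C i)
    (hginj : ∀ i, ∀ j j', j < n i → j' < n i → g i j = g i j' → j = j')
    (a : Fin t → V) (haP : ∀ i, a i ∈ P.support)
    (haadj : ∀ i, ∃ v ∈ C i, T.Adj v (a i))
    (hTS : ∀ u w : V, T_S.Adj u w ↔
      ((u ∈ P.support ∧ w ∈ P.support ∧ T.Adj u w) ∨
       (∃ i, ∃ j, j + 1 < n i ∧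
          ((u = g i j ∧ w = g i (j + 1)) ∨ (w = g i j ∧ u = g i (j + 1)))) ∨
       (∃ i, (u = a i ∧ w = g i 0) ∨ (w = a i ∧ u = g i 0)))) :
    graphBandwidth T_S ≤ 2 * graphBandwidth T :=
  simplified_instance_bandwidth_le' T T_S p t x y P C hCP hCdisj hCconn
    n hn hnpos g hg hginj a haP haadj hTS
end

section
/- Let T be a tree of pathwidth at most p and let P be a path in T between a vertex in the first bag and a vertex in the last bag of a width-p path decomposition of T. Then every connected component of T − P has pathwidth at most p − 1 and is joined to P by exactly one edge. In particular every tree of pathwidth at most p admits a p-recursive path decomposition. -/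
/-!
A walk from the first bag to the last bag of a path decomposition meets every bag, so every
bag of the decomposition contains a vertex of the spine `P`. Restricting the bags to a
component `C` of `T - P` therefore loses at least one vertex per bag, which gives width
`< p`. Since `C` and `P` are disjoint connected sets of a tree, two distinct edges between
them would close a cycle, and `C` is joined to `P` because `T` is connected.
-/

open SimpleGraph

namespace IsPathDecomp

variable {V : Type} {G : SimpleGraph V} {m : ℕ} {X : Fin m → Finset V}

theorem exists_mem_support_mem (hX : IsPathDecomp G m X) {a b : V} (q : G.Walk a b)
    {i j k : Fin m} (ha : a ∈ X i) (hb : b ∈ X k) (hij : i ≤ j) (hjk : j ≤ k) :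
    ∃ w ∈ q.support, w ∈ X j := by
  induction q generalizing i with
  | nil => exact ⟨_, Walk.start_mem_support _, hX.interval _ i j k hij hjk ha hb⟩
  | @cons a c b hac q ih =>
    obtain ⟨l, hal, hcl⟩ := hX.edges a c hac
    rcases le_total l j with hlj | hjl
    · obtain ⟨w, hw, hwj⟩ := ih hcl hb hlj
      exact ⟨w, List.mem_cons_of_mem _ hw, hwj⟩
    · exact ⟨a, List.mem_cons_self, hX.interval a i j l hij hjl ha hal⟩

theorem induce (hX : IsPathDecomp G m X) (s : Set V) [DecidablePred (· ∈ s)] :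
    IsPathDecomp (G.induce s) m fun i => (X i).subtype (· ∈ s) where
  cover v := by simpa using hX.cover v
  edges a b hab := by simpa using hX.edges a b hab
  interval v i j k hij hjk := by simpa using hX.interval v i j k hij hjk

end IsPathDecomp

theorem pathwidth_lt_of_isPathDecomp {V : Type} [Fintype V] [Nonempty V]
    {G : SimpleGraph V} {m p : ℕ} {X : Fin m → Finset V} (hX : IsPathDecomp G m X)
    (hcard : ∀ i, (X i).card ≤ p) :
    pathwidth G < p := by
  obtain ⟨i, hi⟩ := hX.cover (Classical.arbitrary V)
  have hp : 0 < p := (Finset.card_pos.mpr ⟨_, hi⟩).trans_le (hcard i)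
  have hle : pathwidth G ≤ p - 1 :=
    Nat.sInf_le ⟨m, X, hX, fun i => (hcard i).trans (by omega)⟩
  omega

namespace SimpleGraph

variable {V : Type} {G : SimpleGraph V}

theorem Preconnected.exists_walk_support_subset {s : Set V} (hs : (G.induce s).Preconnected)
    {a b : V} (ha : a ∈ s) (hb : b ∈ s) : ∃ q : G.Walk a b, ∀ w ∈ q.support, w ∈ s := by
  obtain ⟨q⟩ := hs ⟨a, ha⟩ ⟨b, hb⟩
  refine ⟨q.map (Embedding.induce s).toHom, fun w hw => ?_⟩
  obtain ⟨w', -, rfl⟩ := List.mem_map.mp (Walk.support_map _ q ▸ hw)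
  exact w'.2

theorem IsAcyclic.eq_of_adj_of_preconnected {s t : Set V} (hG : G.IsAcyclic)
    (hst : Disjoint s t) (hs : (G.induce s).Preconnected) (ht : (G.induce t).Preconnected)
    {x₁ x₂ y₁ y₂ : V} (hx₁ : x₁ ∈ s) (hx₂ : x₂ ∈ s) (hy₁ : y₁ ∈ t) (hy₂ : y₂ ∈ t)
    (h₁ : G.Adj x₁ y₁) (h₂ : G.Adj x₂ y₂) : x₁ = x₂ ∧ y₁ = y₂ := by
  obtain ⟨qs, hqs⟩ := hs.exists_walk_support_subset hx₁ hx₂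
  obtain ⟨qt, hqt⟩ := ht.exists_walk_support_subset hy₂ hy₁
  have hbridge := isBridge_iff_forall_walk_mem_edges.mp (isAcyclic_iff_forall_adj_isBridge.mp hG h₁)
  have hmem := hbridge (qs.append (.cons h₂ qt))
  simp only [Walk.edges_append, Walk.edges_cons, List.mem_append, List.mem_cons] at hmem
  rcases hmem with hmem | hmem | hmem
  · exact absurd (hqs _ (qs.snd_mem_support_of_mem_edges hmem))
      (hst.notMem_of_mem_right hy₁)
  · rcases Sym2.eq_iff.mp hmem with ⟨rfl, rfl⟩ | ⟨rfl, -⟩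
    · exact ⟨rfl, rfl⟩
    · exact absurd hx₁ (hst.notMem_of_mem_right hy₂)
  · exact absurd (hqt _ (qt.fst_mem_support_of_mem_edges hmem)) (hst.notMem_of_mem_left hx₁)

end SimpleGraph

theorem components_after_removing_spine_general {V : Type} [Fintype V]
    (T : SimpleGraph V) (hT : T.IsTree) (p m : ℕ) (hm : 0 < m)
    (X : Fin m → Finset V) (hX : IsPathDecomp T m X)
    (hwidth : ∀ i, (X i).card ≤ p + 1)
    (u v : V) (hu : u ∈ X ⟨0, hm⟩) (hv : v ∈ X ⟨m - 1, Nat.sub_lt hm Nat.one_pos⟩)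
    (P : T.Walk u v)
    (C : Finset V) (hCne : C.Nonempty)
    (hCP : ∀ w ∈ C, w ∉ P.support)
    (hCconn : (T.induce (↑C : Set V)).Connected)
    (hCcomp : ∀ w ∈ C, ∀ z : V, T.Adj w z → z ∈ C ∨ z ∈ P.support) :
    pathwidth (T.induce (↑C : Set V)) < p ∧
      ∃! e : V × V, e.1 ∈ C ∧ e.2 ∈ P.support ∧ T.Adj e.1 e.2 := by
  classical
  have hspine (i : Fin m) : ∃ w ∈ P.support, w ∈ X i :=
    hX.exists_mem_support_mem P hu hv (Fin.le_def.mpr (Nat.zero_le _))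
      (Fin.le_def.mpr (Nat.le_sub_one_of_lt i.isLt))
  refine ⟨?_, ?_⟩
  · have : Nonempty (↑C : Set V) := hCne.coe_sort
    refine pathwidth_lt_of_isPathDecomp (hX.induce _) fun i => ?_
    obtain ⟨w, hwP, hwi⟩ := hspine i
    have hlt : ((X i).filter (· ∈ (↑C : Set V))).card < (X i).card :=
      Finset.card_lt_card (Finset.filter_ssubset.mpr ⟨w, hwi, fun hwC => hCP w hwC hwP⟩)
    rw [Finset.card_subtype]
    exact Nat.le_of_lt_succ (hlt.trans_le (hwidth i))
  · obtain ⟨w, hw⟩ := hCne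
    obtain ⟨W⟩ := hT.connected.preconnected w u
    obtain ⟨d, -, hdC, hdC'⟩ :=
      W.exists_boundary_dart C hw fun huC => hCP u huC P.start_mem_support
    have hdP := (hCcomp _ hdC _ d.adj).resolve_left hdC'
    refine ⟨(d.fst, d.snd), ⟨hdC, hdP, d.adj⟩, fun e ⟨he₁, he₂, he⟩ => ?_⟩
    obtain ⟨h₁, h₂⟩ :=
      hT.isAcyclic.eq_of_adj_of_preconnected (s := C) (t := {w | w ∈ P.support})
        (Set.disjoint_left.mpr hCP) hCconn.preconnected P.connected_induce_support.preconnected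
        he₁ hdC he₂ hdP he d.adj
    exact Prod.ext h₁ h₂

/-- Let `T` be a tree with a width-`p` path decomposition, and let `P` be a path from a
vertex `u` of the first bag to a vertex `v` of the last bag.  Then every connected
component `C` of `T - P` has pathwidth less than `p` (i.e. at most `p - 1`) and is
joined to `P` by exactly one edge; hence `T` admits a `p`-recursive path
decomposition. -/
theorem components_after_removing_spine {V : Type} [Fintype V] [DecidableEq V]
    (T : SimpleGraph V) (hT : T.IsTree) (p m : ℕ) (hm : 0 < m)
    (X : Fin m → Finset V) (hX : IsPathDecomp T m X)
    (hwidth : ∀ i, (X i).card ≤ p + 1)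
    (u v : V) (hu : u ∈ X ⟨0, hm⟩) (hv : v ∈ X ⟨m - 1, Nat.sub_lt hm Nat.one_pos⟩)
    (P : T.Walk u v) (hP : P.IsPath)
    (C : Finset V) (hCne : C.Nonempty)
    (hCP : ∀ w ∈ C, w ∉ P.support)
    (hCconn : (T.induce (↑C : Set V)).Connected)
    (hCcomp : ∀ w ∈ C, ∀ z : V, T.Adj w z → z ∈ C ∨ z ∈ P.support) :
    pathwidth (T.induce (↑C : Set V)) < p ∧
      ∃! e : V × V, e.1 ∈ C ∧ e.2 ∈ P.support ∧ T.Adj e.1 e.2 :=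
  components_after_removing_spine_general T hT p m hm X hX hwidth u v hu hv P C hCne hCP hCconn
    hCcomp
end

section
/- Let T be a caterpillar with a backbone B = (b₁,...,b_k), and suppose each stray P is assigned a color C(P) ∈ {1,...,12b²−1} such that strays whose associated directional intervals intersect receive distinct colors. Define α by α(b_i) = 48b³(n+i) for backbone vertices, and for a stray P = (p₁,...,p_m) ordered by increasing distance to B and attached at u ∈ B: α(p_i) = α(u) + C(P) − i·12b² if P is oriented west, and α(p_i) = α(u) + C(P) + (i−1)·12b² otherwise. Then α is injective and has bandwidth at most 48b³; hence its compression is a layout of T of bandwidth at most 48b³. -/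
/-!
Modulo `M = 12b²` every backbone vertex is placed at `0` and every vertex of a stray at the
stray's colour, and the vertices of a stray occupy the points `l + C, l + C + M, …` strictly inside
its directional interval `[l, l + mM]`. So two vertices at the same position lie on strays of
equal colour whose directional intervals meet, i.e. on the same stray, and then they coincide.
Adjacent backbone vertices are `K = 48b³` apart, consecutive stray vertices `M ≤ K` apart, and a
stray starts less than `M` away from its attachment vertex. Finally, ranking the vertices by
position (compression) does not stretch any distance.
-/

open Function

theorem Fin.sub_le_sub_of_strictMono {n : ℕ} {g : Fin n → ℤ} (hg : StrictMono g) {i j : Fin n}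
    (hij : i ≤ j) : (j : ℤ) - i ≤ g j - g i := by
  have hcard := Finset.card_le_card_of_injOn g
    (fun x hx => by
      rw [Finset.mem_coe, Finset.mem_Icc] at hx ⊢
      exact ⟨hg.monotone hx.1, hg.monotone hx.2⟩)
    (hg.injective.injOn (s := Finset.Icc i j))
  rw [Fin.card_Icc, Int.card_Icc] at hcard
  have hgij := hg.monotone hij
  have hij' : (i : ℕ) ≤ j := hij
  omega

theorem Fin.abs_sub_le_abs_sub_of_strictMono {n : ℕ} {g : Fin n → ℤ} (hg : StrictMono g)
    (i j : Fin n) : |(i : ℤ) - j| ≤ |g i - g j| := by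
  wlog hji : j ≤ i generalizing i j
  · rw [abs_sub_comm, abs_sub_comm (g i)]
    exact this j i (le_of_not_ge hji)
  have hg_sub := Fin.sub_le_sub_of_strictMono hg hji
  have hji' : (j : ℤ) ≤ i := by exact_mod_cast hji
  rwa [abs_of_nonneg (by linarith), abs_of_nonneg (by linarith)]

theorem exists_equiv_fin_abs_sub_le {V : Type*} [Fintype V] {A : V → ℤ} (hA : Injective A) :
    ∃ γ : V ≃ Fin (Fintype.card V), ∀ u v, |(γ u : ℤ) - γ v| ≤ |A u - A v| := by
  let _ : LinearOrder V := LinearOrder.lift' A hA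
  let e : Fin (Fintype.card V) ≃o V := monoEquivOfFin V rfl
  have hmono : StrictMono (A ∘ e) := fun _ _ h => e.strictMono h
  refine ⟨e.symm.toEquiv, fun u v => ?_⟩
  simpa using Fin.abs_sub_le_abs_sub_of_strictMono hmono (e.symm u) (e.symm v)

/-- Relative to the directional interval `[l, l + m·M]` of a stray of length `m` and colour `C`,
its `j`-th vertex is placed at `l + strayOffset m west j · M + C`. -/
def strayOffset (m : ℕ) (west : Bool) (j : ℕ) : ℤ :=
  if west then (m : ℤ) - j else (j : ℤ) - 1

theorem strayOffset_injOn (m : ℕ) (west : Bool) :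
    Set.InjOn (strayOffset m west) (Set.Icc 1 m) := by
  intro j _ j' _ h
  cases west <;> simp only [strayOffset, if_true, if_false, Bool.false_eq_true] at h <;> omega

theorem strayOffset_mul_add_mem_Icc {m j : ℕ} (west : Bool) (hj : 1 ≤ j) (hjm : j ≤ m)
    {M c : ℤ} (hM : 0 ≤ M) (hc : 0 ≤ c) (hcM : c ≤ M) :
    strayOffset m west j * M + c ∈ Set.Icc 0 (M * m) := by
  have hbounds : 0 ≤ strayOffset m west j ∧ strayOffset m west j ≤ m - 1 := by
    cases west <;> simp only [strayOffset, if_true, if_false, Bool.false_eq_true] <;> omega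
  constructor <;> nlinarith

theorem Int.eq_of_add_eq_add_of_dvd {M x y c c' : ℤ} (hx : M ∣ x) (hy : M ∣ y)
    (hc : 0 ≤ c ∧ c < M) (hc' : 0 ≤ c' ∧ c' < M) (h : x + c = y + c') : c = c' := by
  have hdvd : M ∣ c - c' := by
    rw [show c - c' = y - x by linarith]
    exact dvd_sub hy hx
  have := Int.eq_zero_of_abs_lt_dvd hdvd (abs_sub_lt_iff.2 ⟨by linarith, by linarith⟩)
  linarith

section Caterpillar

variable {V : Type*} {A : V → ℤ} {M K n : ℤ} {kb N : ℕ} {bb : ℕ → V} {m : Fin N → ℕ}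
  {pos : Fin N → ℕ} {pv : Fin N → ℕ → V} {dir : Fin N → Bool} {l c : Fin N → ℤ}

theorem stray_value_eq_strayOffset
    (hpos : ∀ i, 1 ≤ pos i ∧ pos i ≤ kb)
    (hl : ∀ i, l i = if dir i then (pos i : ℤ) * K - M * m i else (pos i : ℤ) * K)
    (hbb : ∀ i, 1 ≤ i → i ≤ kb → A (bb i) = K * (n + i))
    (hpv : ∀ i j, 1 ≤ j → j ≤ m i →
      A (pv i j) = A (bb (pos i)) + c i + (if dir i then -((j : ℤ) * M) else ((j : ℤ) - 1) * M))
    (i : Fin N) (j : ℕ) (hj : 1 ≤ j) (hjm : j ≤ m i) :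
    A (pv i j) = K * n + l i + strayOffset (m i) (dir i) j * M + c i := by
  rw [hpv i j hj hjm, hbb (pos i) (hpos i).1 (hpos i).2, hl i, strayOffset]
  cases dir i <;> simp only [if_true, if_false, Bool.false_eq_true] <;> ring

theorem caterpillar_layout_injective (hM : 0 < M) (hK : K ≠ 0) (hMK : M ∣ K)
    (hlM : ∀ i, M ∣ l i) (hc : ∀ i, 0 < c i ∧ c i < M)
    (hcolor : ∀ i i', i ≠ i' → l i ≤ l i' + M * m i' → l i' ≤ l i + M * m i → c i ≠ c i')
    (hcover : ∀ v, (∃ i, 1 ≤ i ∧ i ≤ kb ∧ v = bb i) ∨ ∃ i j, 1 ≤ j ∧ j ≤ m i ∧ v = pv i j)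
    (hbb : ∀ i, 1 ≤ i → i ≤ kb → A (bb i) = K * (n + i))
    (hpv : ∀ i j, 1 ≤ j → j ≤ m i →
      A (pv i j) = K * n + l i + strayOffset (m i) (dir i) j * M + c i) :
    Injective A := by
  have hdvd : ∀ i t, M ∣ K * n + l i + t * M := fun i t =>
    dvd_add (dvd_add (hMK.mul_right n) (hlM i)) (dvd_mul_left M t)
  have hbb_dvd : ∀ i, M ∣ K * (n + i) := fun i => hMK.mul_right _
  intro u w h
  rcases hcover u with ⟨i, hi, hik, rfl⟩ | ⟨i, j, hj, hjm, rfl⟩ <;>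
    rcases hcover w with ⟨i', hi', hik', rfl⟩ | ⟨i', j', hj', hjm', rfl⟩
  · rw [hbb i hi hik, hbb i' hi' hik'] at h
    have hii' : (n + i : ℤ) = n + i' := mul_left_cancel₀ hK h
    rw [show i = i' by omega]
  · rw [hbb i hi hik, hpv i' j' hj' hjm', ← add_zero (K * _)] at h
    have hc0 := Int.eq_of_add_eq_add_of_dvd (hbb_dvd i) (hdvd i' _) ⟨le_rfl, hM⟩
      ⟨(hc i').1.le, (hc i').2⟩ h
    linarith [(hc i').1]
  · rw [hbb i' hi' hik', hpv i j hj hjm, ← add_zero (K * (n + i'))] at h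
    have hc0 := Int.eq_of_add_eq_add_of_dvd (hdvd i _) (hbb_dvd i') ⟨(hc i).1.le, (hc i).2⟩
      ⟨le_rfl, hM⟩ h
    linarith [(hc i).1]
  · rw [hpv i j hj hjm, hpv i' j' hj' hjm'] at h
    have hcc := Int.eq_of_add_eq_add_of_dvd (hdvd i _) (hdvd i' _) ⟨(hc i).1.le, (hc i).2⟩
      ⟨(hc i').1.le, (hc i').2⟩ h
    obtain ⟨hs0, hsm⟩ := strayOffset_mul_add_mem_Icc (dir i) hj hjm hM.le (hc i).1.le (hc i).2.le
    obtain ⟨hs0', hsm'⟩ :=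
      strayOffset_mul_add_mem_Icc (dir i') hj' hjm' hM.le (hc i').1.le (hc i').2.le
    obtain rfl : i = i' := by
      by_contra hne
      exact hcolor i i' hne (by linarith) (by linarith) hcc
    have hoff : strayOffset (m i) (dir i) j = strayOffset (m i) (dir i) j' :=
      mul_right_cancel₀ hM.ne' (by linarith)
    rw [strayOffset_injOn (m i) (dir i) ⟨hj, hjm⟩ ⟨hj', hjm'⟩ hoff]

theorem abs_sub_stray_succ (hM : 0 ≤ M)
    (hpv : ∀ i j, 1 ≤ j → j ≤ m i →
      A (pv i j) = A (bb (pos i)) + c i + (if dir i then -((j : ℤ) * M) else ((j : ℤ) - 1) * M))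
    {i : Fin N} {j : ℕ} (hj : 1 ≤ j) (hjm : j + 1 ≤ m i) :
    |A (pv i j) - A (pv i (j + 1))| = M := by
  rw [hpv i j hj (by omega), hpv i (j + 1) (by omega) hjm]
  cases dir i <;> simp only [if_true, if_false, Bool.false_eq_true] <;> push_cast
  · rw [show ∀ x : ℤ, x + (j - 1) * M - (x + (j + 1 - 1) * M) = -M by intro; ring, abs_neg,
      abs_of_nonneg hM]
  · rw [show ∀ x : ℤ, x + -(j * M) - (x + -((j + 1) * M)) = M by intro; ring, abs_of_nonneg hM]

theorem abs_sub_stray_attachment_lt (hmpos : ∀ i, 1 ≤ m i) (hc : ∀ i, 0 < c i ∧ c i < M)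
    (hpv : ∀ i j, 1 ≤ j → j ≤ m i →
      A (pv i j) = A (bb (pos i)) + c i + (if dir i then -((j : ℤ) * M) else ((j : ℤ) - 1) * M))
    (i : Fin N) : |A (bb (pos i)) - A (pv i 1)| < M := by
  rw [hpv i 1 le_rfl (hmpos i), abs_lt]
  have := hc i
  cases dir i <;> simp only [if_true, if_false, Bool.false_eq_true] <;> push_cast <;>
    constructor <;> linarith

theorem abs_sub_le_of_caterpillar_edge (hM : 0 < M) (hMK : M ≤ K) (hmpos : ∀ i, 1 ≤ m i)
    (hc : ∀ i, 0 < c i ∧ c i < M)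
    (hbb : ∀ i, 1 ≤ i → i ≤ kb → A (bb i) = K * (n + i))
    (hpv : ∀ i j, 1 ≤ j → j ≤ m i →
      A (pv i j) = A (bb (pos i)) + c i + (if dir i then -((j : ℤ) * M) else ((j : ℤ) - 1) * M))
    {u w : V}
    (huw : (∃ i, 1 ≤ i ∧ i + 1 ≤ kb ∧
          ((u = bb i ∧ w = bb (i + 1)) ∨ (w = bb i ∧ u = bb (i + 1)))) ∨
       (∃ i : Fin N, ∃ j, 1 ≤ j ∧ j + 1 ≤ m i ∧
          ((u = pv i j ∧ w = pv i (j + 1)) ∨ (w = pv i j ∧ u = pv i (j + 1)))) ∨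
       (∃ i : Fin N, (u = bb (pos i) ∧ w = pv i 1) ∨ (w = bb (pos i) ∧ u = pv i 1))) :
    |A u - A w| ≤ K := by
  have hbackbone : ∀ i, 1 ≤ i → i + 1 ≤ kb → |A (bb i) - A (bb (i + 1))| ≤ K := by
    intro i hi hik
    rw [hbb i hi (by omega), hbb (i + 1) (by omega) hik, Nat.cast_succ,
      show K * (n + i) - K * (n + (i + 1)) = -K by ring, abs_neg, abs_of_pos (hM.trans_le hMK)]
  have hstray := fun i j (hj : 1 ≤ j) (hjm : j + 1 ≤ m i) =>
    (abs_sub_stray_succ hM.le hpv hj hjm).trans_le hMK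
  have hattach := fun i => (abs_sub_stray_attachment_lt hmpos hc hpv i).le.trans hMK
  rcases huw with ⟨i, hi, hik, ⟨rfl, rfl⟩ | ⟨rfl, rfl⟩⟩ |
      ⟨i, j, hj, hjm, ⟨rfl, rfl⟩ | ⟨rfl, rfl⟩⟩ | ⟨i, ⟨rfl, rfl⟩ | ⟨rfl, rfl⟩⟩
  · exact hbackbone i hi hik
  · exact abs_sub_comm (A _) _ ▸ hbackbone i hi hik
  · exact hstray i j hj hjm
  · exact abs_sub_comm (A _) _ ▸ hstray i j hj hjm
  · exact hattach i
  · exact abs_sub_comm (A _) _ ▸ hattach i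

end Caterpillar

/-- The layout produced by the caterpillar algorithm has bandwidth at most `48·b³`.
The caterpillar `T` has backbone `bb 1, ..., bb kb` and strays indexed by `Fin N`:
stray `i` has vertices `pv i 1, ..., pv i (m i)` (ordered by increasing distance to
the backbone) and is attached at `bb (pos i)`; its directional interval is
`[l i, l i + 12 b² (m i)]`.  Given a coloring `Cc` of the strays with colors in
`{1, ..., 12b² - 1}` such that strays with intersecting directional intervals get
distinct colors, the sparse ordering `A` defined by `A (bb i) = 48 b³ (n + i)` and
`A (pv i j) = A (bb (pos i)) + Cc i - j·12b²` (west) resp.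
`A (pv i j) = A (bb (pos i)) + Cc i + (j-1)·12b²` (east) is injective and has
bandwidth at most `48 b³`; hence its compression is a layout of bandwidth `≤ 48 b³`. -/
theorem catAlg_layout_bandwidth {V : Type} [Fintype V] (T : SimpleGraph V)
    (b : ℕ) (hb : 1 ≤ b)
    (kb N : ℕ) (bb : ℕ → V) (m : Fin N → ℕ) (hmpos : ∀ i, 1 ≤ m i)
    (pos : Fin N → ℕ) (hpos : ∀ i, 1 ≤ pos i ∧ pos i ≤ kb)
    (pv : Fin N → ℕ → V) (dir : Fin N → Bool)
    (hcover : ∀ v : V, (∃ i, 1 ≤ i ∧ i ≤ kb ∧ v = bb i) ∨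
        ∃ i : Fin N, ∃ j, 1 ≤ j ∧ j ≤ m i ∧ v = pv i j)
    (hadj : ∀ u w : V, T.Adj u w ↔
      ((∃ i, 1 ≤ i ∧ i + 1 ≤ kb ∧
          ((u = bb i ∧ w = bb (i + 1)) ∨ (w = bb i ∧ u = bb (i + 1)))) ∨
       (∃ i : Fin N, ∃ j, 1 ≤ j ∧ j + 1 ≤ m i ∧
          ((u = pv i j ∧ w = pv i (j + 1)) ∨ (w = pv i j ∧ u = pv i (j + 1)))) ∨
       (∃ i : Fin N, (u = bb (pos i) ∧ w = pv i 1) ∨ (w = bb (pos i) ∧ u = pv i 1))))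
    (l : Fin N → ℤ)
    (hl : ∀ i, l i = if dir i
        then (pos i : ℤ) * (48 * (b : ℤ) ^ 3) - 12 * (b : ℤ) ^ 2 * (m i : ℤ)
        else (pos i : ℤ) * (48 * (b : ℤ) ^ 3))
    (Cc : Fin N → ℕ) (hCc : ∀ i, 1 ≤ Cc i ∧ Cc i ≤ 12 * b ^ 2 - 1)
    (hcolor : ∀ i j : Fin N, i ≠ j →
        l i ≤ l j + 12 * (b : ℤ) ^ 2 * (m j : ℤ) →
        l j ≤ l i + 12 * (b : ℤ) ^ 2 * (m i : ℤ) → Cc i ≠ Cc j)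
    (A : V → ℤ)
    (hAbb : ∀ i, 1 ≤ i → i ≤ kb →
        A (bb i) = 48 * (b : ℤ) ^ 3 * ((Fintype.card V : ℤ) + i))
    (hApv : ∀ (i : Fin N) (j : ℕ), 1 ≤ j → j ≤ m i →
        A (pv i j) = A (bb (pos i)) + (Cc i : ℤ) +
          (if dir i then -((j : ℤ) * (12 * (b : ℤ) ^ 2))
           else ((j : ℤ) - 1) * (12 * (b : ℤ) ^ 2))) :
    Function.Injective A ∧
    (∀ u w : V, T.Adj u w → |A u - A w| ≤ 48 * (b : ℤ) ^ 3) ∧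
    ∃ γ : V ≃ Fin (Fintype.card V), layoutBandwidthLE T γ (48 * b ^ 3) := by
  have hM : 0 < 12 * (b : ℤ) ^ 2 := by positivity
  have hK : 48 * (b : ℤ) ^ 3 = 4 * b * (12 * (b : ℤ) ^ 2) := by ring
  have hMK : 12 * (b : ℤ) ^ 2 ≤ 48 * (b : ℤ) ^ 3 := by
    rw [hK]; exact le_mul_of_one_le_left hM.le (by norm_cast; omega)
  have hcol : ∀ i, 0 < (Cc i : ℤ) ∧ (Cc i : ℤ) < 12 * (b : ℤ) ^ 2 := fun i => by
    have hb2 : 1 ≤ b ^ 2 := Nat.one_le_pow _ _ hb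
    have hlt : Cc i < 12 * b ^ 2 := by have := (hCc i).2; omega
    exact ⟨by exact_mod_cast (hCc i).1, by exact_mod_cast hlt⟩
  have hlM : ∀ i, 12 * (b : ℤ) ^ 2 ∣ l i := fun i => by
    rw [hl i]
    split
    · exact Dvd.intro (4 * b * pos i - m i) (by ring)
    · exact Dvd.intro (4 * b * pos i) (by ring)
  have hinj : Function.Injective A :=
    caterpillar_layout_injective hM (by positivity) ⟨4 * b, by ring⟩ hlM hcol
      (fun i i' hne h h' => by exact_mod_cast hcolor i i' hne h h') hcover hAbb
      (stray_value_eq_strayOffset hpos hl hAbb hApv)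
  have hbw : ∀ u w : V, T.Adj u w → |A u - A w| ≤ 48 * (b : ℤ) ^ 3 := fun u w huw =>
    abs_sub_le_of_caterpillar_edge hM hMK hmpos hcol hAbb hApv ((hadj u w).1 huw)
  obtain ⟨γ, hγ⟩ := exists_equiv_fin_abs_sub_le hinj
  exact ⟨hinj, hbw, γ, fun u w huw => by push_cast; exact (hγ u w).trans (hbw u w huw)⟩
end

section
/- Let T be a graph, α a layout of T of bandwidth at most b, and let Π be a k-gate in T with center c (a star with 2(b−k) leaves embedded in T, with designated leaves in and out) such that k paths P¹,...,Pᵏ, disjoint from Π and from each other, each pass through the gate with respect to α. Then the interval B = [α(c)−b, α(c)+b] contains α(N[c]) and is contained in α(∪Pⁱ ∪ N[c]); moreover each Pⁱ has exactly one vertex mapped to [α(c)−b, α(c)) and exactly one mapped to (α(c), α(c)+b]. -/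
/-!
Every path `Pⁱ` has vertices on both sides of `α c` but none at `α c`, so one of its edges jumps
over `α c`; by the bandwidth bound its endpoints lie in `[α c - b, α c)` and `(α c, α c + b]`.
Hence each path has at least two vertices in the window `B`, which also contains the
`2(b - k) + 1` vertices of `N[c]`. These `2b + 1` vertices are distinct and `|B| = 2b + 1`,
so every count is tight: `B` is covered and each path has exactly one vertex on each side.
-/

open Finset Function

namespace SimpleGraph.Walk

variable {V : Type} {G : SimpleGraph V}

theorem exists_adj_mem_support_of_mem_of_notMem {x y u v : V} (p : G.Walk x y) (S : Set V)
    (hu : u ∈ p.support) (huS : u ∈ S) (hv : v ∈ p.support) (hvS : v ∉ S) :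
    ∃ a a', G.Adj a a' ∧ a ∈ p.support ∧ a' ∈ p.support ∧ a ∈ S ∧ a' ∉ S := by
  classical
  by_cases hx : x ∈ S
  · obtain ⟨d, hd, hd₁, hd₂⟩ := (p.takeUntil v hv).exists_boundary_dart S hx hvS
    exact ⟨d.fst, d.snd, d.adj,
      p.support_takeUntil_subset_support hv (dart_fst_mem_support_of_mem_darts _ hd),
      p.support_takeUntil_subset_support hv (dart_snd_mem_support_of_mem_darts _ hd), hd₁, hd₂⟩
  · obtain ⟨d, hd, hd₁, hd₂⟩ :=
      (p.takeUntil u hu).exists_boundary_dart Sᶜ hx (Set.notMem_compl_iff.mpr huS)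
    exact ⟨d.snd, d.fst, d.adj.symm,
      p.support_takeUntil_subset_support hu (dart_snd_mem_support_of_mem_darts _ hd),
      p.support_takeUntil_subset_support hu (dart_fst_mem_support_of_mem_darts _ hd),
      Set.notMem_compl_iff.mp hd₂, hd₁⟩

theorem exists_Ico_and_Ioc_of_forall_ne {f : V → ℤ} {b : ℕ}
    (hf : ∀ u v, G.Adj u v → |f u - f v| ≤ b) {t : ℤ} {x y : V} (p : G.Walk x y)
    (ht : ∀ w ∈ p.support, f w ≠ t) (hlo : ∃ u ∈ p.support, f u ≤ t)
    (hhi : ∃ v ∈ p.support, t ≤ f v) :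
    (∃ u ∈ p.support, f u ∈ Set.Ico (t - b) t) ∧ ∃ v ∈ p.support, f v ∈ Set.Ioc t (t + b) := by
  obtain ⟨u₀, hu₀, hu₀t⟩ := hlo
  obtain ⟨v₀, hv₀, hv₀t⟩ := hhi
  obtain ⟨u, v, huv, hu, hv, hut, hvt⟩ := p.exists_adj_mem_support_of_mem_of_notMem
    {w | f w < t} hu₀ (lt_of_le_of_ne hu₀t (ht u₀ hu₀)) hv₀ (not_lt.mpr hv₀t)
  have hut : f u < t := hut
  have hvt : t < f v := lt_of_le_of_ne (not_lt.mp hvt) (ht v hv).symm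
  have hband := abs_le.mp (hf u v huv)
  exact ⟨⟨u, hu, by omega, hut⟩, v, hv, hvt, by omega⟩

end SimpleGraph.Walk

theorem SimpleGraph.mem_Icc_of_mem_insert_neighborSet {V : Type} {G : SimpleGraph V}
    {f : V → ℤ} {b : ℕ} (hf : ∀ u v, G.Adj u v → |f u - f v| ≤ b) {c x : V}
    (hx : x ∈ insert c (G.neighborSet c)) : f x ∈ Set.Icc (f c - b) (f c + b) := by
  rcases hx with rfl | hx
  · constructor <;> omega
  · have := abs_le.mp (hf c x hx)
    constructor <;> linarith

theorem exists_le_and_le_of_inclInterval_subset {V : Type} [Fintype V]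
    {α : V ≃ Fin (Fintype.card V)} {S P : Set V} {c : V} (hc : c ∈ S) (hP : P.Nonempty)
    (h : inclInterval α S ⊆ inclInterval α P) :
    (∃ u ∈ P, α u ≤ α c) ∧ ∃ v ∈ P, α c ≤ α v := by
  obtain ⟨hlo, hhi⟩ := h ⟨Nat.sInf_le ⟨c, hc, rfl⟩,
    le_csSup (Set.toFinite _).bddAbove ⟨c, hc, rfl⟩⟩
  obtain ⟨u, hu, hu'⟩ := Nat.sInf_mem (hP.image fun x => (α x : ℕ))
  obtain ⟨v, hv, hv'⟩ := (hP.image fun x => (α x : ℕ)).csSup_mem (Set.toFinite _)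
  exact ⟨⟨u, hu, Fin.le_def.mpr (hu'.trans_le hlo)⟩, v, hv, Fin.le_def.mpr (hhi.trans_eq hv'.symm)⟩

theorem SimpleGraph.Walk.exists_Ico_and_Ioc_of_inclInterval_subset {V : Type} [Fintype V]
    {G : SimpleGraph V} {α : V ≃ Fin (Fintype.card V)} {b : ℕ} (hα : layoutBandwidthLE G α b)
    {S : Set V} {c x y : V} (hc : c ∈ S) (p : G.Walk x y) (hpc : c ∉ p.support)
    (hpass : inclInterval α S ⊆ inclInterval α {w | w ∈ p.support}) :
    (∃ u ∈ p.support, (α u : ℤ) ∈ Set.Ico ((α c : ℤ) - b) (α c : ℤ)) ∧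
      ∃ v ∈ p.support, (α v : ℤ) ∈ Set.Ioc (α c : ℤ) ((α c : ℤ) + b) := by
  obtain ⟨⟨u, hu, huc⟩, v, hv, hcv⟩ :=
    exists_le_and_le_of_inclInterval_subset hc ⟨x, p.start_mem_support⟩ hpass
  refine p.exists_Ico_and_Ioc_of_forall_ne hα (fun w hw h => ?_) ⟨u, hu, by exact_mod_cast huc⟩
    ⟨v, hv, by exact_mod_cast hcv⟩
  exact hpc (α.injective (Fin.ext (by exact_mod_cast h)) ▸ hw)

theorem Finset.card_eq_and_image_eq_of_disjoint {β γ ι : Type*} [DecidableEq β] [DecidableEq γ]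
    [Fintype ι] {f : β → γ} (hf : Injective f) {A : Finset β} {Q : ι → Finset β}
    {B : Finset γ} {m : ℕ} (hQ : Pairwise (Disjoint on Q)) (hAQ : ∀ i, Disjoint A (Q i))
    (hm : ∀ i, m ≤ #(Q i)) (hAB : ∀ x ∈ A, f x ∈ B) (hQB : ∀ i, ∀ x ∈ Q i, f x ∈ B)
    (hB : #B ≤ #A + Fintype.card ι * m) :
    (∀ i, #(Q i) = m) ∧ (A ∪ univ.biUnion Q).image f = B := by
  have hcard : #(A ∪ univ.biUnion Q) = #A + ∑ i, #(Q i) := by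
    rw [card_union_of_disjoint ((disjoint_biUnion_right _ _ _).mpr fun i _ => hAQ i),
      card_biUnion fun i _ j _ hij => hQ hij]
  have hsub : (A ∪ univ.biUnion Q).image f ⊆ B := by
    simp only [image_subset_iff, mem_union, mem_biUnion, mem_univ, true_and]
    rintro x (hx | ⟨i, hx⟩)
    exacts [hAB x hx, hQB i x hx]
  have hle := card_le_card hsub
  rw [card_image_of_injective _ hf] at hle
  have hsum : ∑ _i : ι, m ≤ ∑ i, #(Q i) := sum_le_sum fun i _ => hm i
  rw [sum_const, card_univ, smul_eq_mul] at hsum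
  refine ⟨fun i => ?_, eq_of_subset_of_card_le hsub ?_⟩
  · have heq : ∑ _i : ι, m = ∑ i, #(Q i) := by
      rw [sum_const, card_univ, smul_eq_mul]; omega
    exact ((sum_eq_sum_iff_of_le fun i _ => hm i).mp heq i (mem_univ i)).symm
  · rw [card_image_of_injective _ hf]; omega

section Window

variable {V : Type} [DecidableEq V] {f : V → ℤ} {t : ℤ} {b : ℕ} {l : List V}

theorem two_le_card_filter_Icc (hu : ∃ u ∈ l, f u ∈ Set.Ico (t - b) t)
    (hv : ∃ v ∈ l, f v ∈ Set.Ioc t (t + b)) :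
    2 ≤ #(l.toFinset.filter fun x => f x ∈ Set.Icc (t - b) (t + b)) := by
  obtain ⟨u, hul, hut, htu⟩ := hu
  obtain ⟨v, hvl, htv, hvt⟩ := hv
  refine one_lt_card.mpr ⟨u, ?_, v, ?_, fun h => by subst h; omega⟩ <;>
    simp only [mem_filter, List.mem_toFinset, Set.mem_Icc]
  exacts [⟨hul, hut, by omega⟩, ⟨hvl, by omega, hvt⟩]

theorem existsUnique_Ico_and_Ioc_of_card_filter_Icc_eq_two
    (hl : #(l.toFinset.filter fun x => f x ∈ Set.Icc (t - b) (t + b)) = 2)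
    (hu : ∃ u ∈ l, f u ∈ Set.Ico (t - b) t) (hv : ∃ v ∈ l, f v ∈ Set.Ioc t (t + b)) :
    (∃! w, w ∈ l ∧ f w ∈ Set.Ico (t - b) t) ∧ ∃! w, w ∈ l ∧ f w ∈ Set.Ioc t (t + b) := by
  obtain ⟨u, hul, hut, htu⟩ := hu
  obtain ⟨v, hvl, htv, hvt⟩ := hv
  set F := l.toFinset.filter fun x => f x ∈ Set.Icc (t - b) (t + b)
  have hF : ∀ w ∈ l, f w ∈ Set.Icc (t - b) (t + b) → w ∈ F := fun w hwl hw =>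
    mem_filter.mpr ⟨List.mem_toFinset.mpr hwl, hw⟩
  have huv : u ≠ v := fun h => by subst h; omega
  have hFuv : F = {u, v} := by
    refine (eq_of_subset_of_card_le ?_ (by rw [hl, card_pair huv])).symm
    exact insert_subset_iff.mpr ⟨hF u hul ⟨hut, by omega⟩,
      singleton_subset_iff.mpr (hF v hvl ⟨by omega, hvt⟩)⟩
  have hwindow : ∀ w ∈ l, f w ∈ Set.Icc (t - b) (t + b) → w = u ∨ w = v := fun w hwl hw => by
    simpa [hFuv] using hF w hwl hw
  refine ⟨⟨u, ⟨hul, hut, htu⟩, fun w ⟨hwl, hwt, htw⟩ => ?_⟩,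
    ⟨v, ⟨hvl, htv, hvt⟩, fun w ⟨hwl, htw, hwt⟩ => ?_⟩⟩
  · rcases hwindow w hwl ⟨hwt, by omega⟩ with rfl | rfl
    · rfl
    · omega
  · rcases hwindow w hwl ⟨by omega, hwt⟩ with rfl | rfl
    · omega
    · rfl

end Window

theorem gate_lemma_general {V : Type} [Fintype V] (T : SimpleGraph V) (b k : ℕ)
    (α : V ≃ Fin (Fintype.card V)) (hα : layoutBandwidthLE T α b)
    (c : V) (L : Finset V) (hL : L.card = 2 * (b - k))
    (hNc : T.neighborSet c = (↑L : Set V))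
    (xs ys : Fin k → V) (P : ∀ i, T.Walk (xs i) (ys i))
    (hPdisj : ∀ i j, i ≠ j → ∀ w, w ∈ (P i).support → w ∉ (P j).support)
    (hPgate : ∀ i, ∀ w ∈ (P i).support, w ≠ c ∧ w ∉ L)
    (hpass : ∀ i, inclInterval α (insert c (↑L : Set V)) ⊆
        inclInterval α {w | w ∈ (P i).support}) :
    (∀ x ∈ insert c (↑L : Set V),
        (α x : ℤ) ∈ Set.Icc ((α c : ℤ) - (b : ℤ)) ((α c : ℤ) + (b : ℤ))) ∧
    (∀ q : ℤ, q ∈ Set.Icc ((α c : ℤ) - (b : ℤ)) ((α c : ℤ) + (b : ℤ)) →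
        ∃ x : V, (x ∈ insert c (↑L : Set V) ∨ ∃ i, x ∈ (P i).support) ∧ (α x : ℤ) = q) ∧
    (∀ i, (∃! w : V, w ∈ (P i).support ∧
            (α w : ℤ) ∈ Set.Ico ((α c : ℤ) - (b : ℤ)) (α c : ℤ)) ∧
          (∃! w : V, w ∈ (P i).support ∧
            (α w : ℤ) ∈ Set.Ioc (α c : ℤ) ((α c : ℤ) + (b : ℤ)))) := by
  classical
  have hinj : Injective fun x => ((α x : ℕ) : ℤ) :=
    (Nat.cast_injective.comp Fin.val_injective).comp α.injective
  have hcL : c ∉ L := fun hc => T.irrefl (by rw [← T.mem_neighborSet, hNc]; exact hc)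
  have hgate : ∀ x ∈ insert c (L : Set V), (α x : ℤ) ∈ Set.Icc ((α c : ℤ) - b) ((α c : ℤ) + b) :=
    fun x hx => T.mem_Icc_of_mem_insert_neighborSet hα (hNc ▸ hx)
  have hcross i := (P i).exists_Ico_and_Ioc_of_inclInterval_subset hα (Set.mem_insert c _)
    (fun h => (hPgate i c h).1 rfl) (hpass i)
  let Q i := (P i).support.toFinset.filter
    fun x => (α x : ℤ) ∈ Set.Icc ((α c : ℤ) - b) ((α c : ℤ) + b)
  have hmemQ {i x} (hx : x ∈ Q i) : x ∈ (P i).support := List.mem_toFinset.mp (mem_filter.mp hx).1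
  obtain ⟨hQcard, hcover⟩ := card_eq_and_image_eq_of_disjoint hinj (A := insert c L) (Q := Q)
    (B := Finset.Icc ((α c : ℤ) - b) ((α c : ℤ) + b)) (m := 2)
    (fun i j hij => disjoint_left.mpr fun x hi hj => hPdisj i j hij x (hmemQ hi) (hmemQ hj))
    (fun i => disjoint_left.mpr fun x hA hQ =>
      (mem_insert.mp hA).elim (hPgate i x (hmemQ hQ)).1 (hPgate i x (hmemQ hQ)).2)
    (fun i => two_le_card_filter_Icc (hcross i).1 (hcross i).2)
    (fun x hx => mem_Icc.mpr (hgate x (by simpa using hx)))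
    (fun i x hx => mem_Icc.mpr (mem_filter.mp hx).2)
    (by rw [Int.card_Icc, card_insert_of_notMem hcL, hL, Fintype.card_fin]; omega)
  refine ⟨hgate, fun q hq => ?_, fun i =>
    existsUnique_Ico_and_Ioc_of_card_filter_Icc_eq_two (hQcard i) (hcross i).1 (hcross i).2⟩
  obtain ⟨x, hx, rfl⟩ := mem_image.mp (hcover ▸ mem_Icc.mpr hq)
  refine ⟨x, ?_, rfl⟩
  rcases mem_union.mp hx with hx | hx
  · exact Or.inl (by simpa using hx)
  · obtain ⟨i, -, hx⟩ := mem_biUnion.mp hx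
    exact Or.inr ⟨i, hmemQ hx⟩

/-- The gate lemma: if a `k`-gate with center `c` and leaf set `L` (`|L| = 2(b-k)`,
`N(c) = L`) is embedded in `T`, and `k` pairwise disjoint paths, disjoint from the
gate, each pass through the gate in a bandwidth-`b` layout `α`, then with
`B = [α c - b, α c + b]` : `α(N[c]) ⊆ B`, `B ⊆ α(⋃ Pⁱ ∪ N[c])`, and each path has
exactly one vertex mapped into `[α c - b, α c)` and exactly one into `(α c, α c + b]`. -/
theorem gate_lemma {V : Type} [Fintype V] (T : SimpleGraph V) (b k : ℕ)
    (α : V ≃ Fin (Fintype.card V)) (hα : layoutBandwidthLE T α b)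
    (c : V) (L : Finset V) (hL : L.card = 2 * (b - k))
    (hNc : T.neighborSet c = (↑L : Set V))
    (xs ys : Fin k → V) (P : ∀ i, T.Walk (xs i) (ys i)) (hP : ∀ i, (P i).IsPath)
    (hPdisj : ∀ i j, i ≠ j → ∀ w, w ∈ (P i).support → w ∉ (P j).support)
    (hPgate : ∀ i, ∀ w ∈ (P i).support, w ≠ c ∧ w ∉ L)
    (hpass : ∀ i, inclInterval α (insert c (↑L : Set V)) ⊆
        inclInterval α {w | w ∈ (P i).support}) :
    (∀ x ∈ insert c (↑L : Set V),
        (α x : ℤ) ∈ Set.Icc ((α c : ℤ) - (b : ℤ)) ((α c : ℤ) + (b : ℤ))) ∧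
    (∀ q : ℤ, q ∈ Set.Icc ((α c : ℤ) - (b : ℤ)) ((α c : ℤ) + (b : ℤ)) →
        ∃ x : V, (x ∈ insert c (↑L : Set V) ∨ ∃ i, x ∈ (P i).support) ∧ (α x : ℤ) = q) ∧
    (∀ i, (∃! w : V, w ∈ (P i).support ∧
            (α w : ℤ) ∈ Set.Ico ((α c : ℤ) - (b : ℤ)) (α c : ℤ)) ∧
          (∃! w : V, w ∈ (P i).support ∧
            (α w : ℤ) ∈ Set.Ioc (α c : ℤ) ((α c : ℤ) + (b : ℤ)))) :=
  gate_lemma_general T b k α hα c L hL hNc xs ys P hPdisj hPgate hpass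
end
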